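/- arXiv:2409.14253 — 9 statements merged into one kernel-verified Lean document; each statement's English description precedes it below -/
import Mathlib

section
/- Let k and ℓ be odd positive integers with ℓ > k, and let n ≥ 2 be an integer. Then a_{k,ℓ}(n) = 0 if and only if n = p³ for some prime p. -/
/-- `σ_s(n) = ∑_{d ∣ n} d^s`, as an integer. -/
def sigmaZ (s n : ℕ) : ℤ := ∑ d ∈ n.divisors, (d : ℤ) ^ s

/-- `a_{k,ℓ}(n) = (n^{3ℓ}+n^{2ℓ}+n^ℓ+1)·σ_{3k}(n) − (n^{3k}+n^{2k}+n^k+1)·σ_{3ℓ}(n)`. -/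
def aFun (k l n : ℕ) : ℤ :=
  ((n : ℤ) ^ (3 * l) + (n : ℤ) ^ (2 * l) + (n : ℤ) ^ l + 1) * sigmaZ (3 * k) n
    - ((n : ℤ) ^ (3 * k) + (n : ℤ) ^ (2 * k) + (n : ℤ) ^ k + 1) * sigmaZ (3 * l) n

namespace AFunCube

/-- The summand in the divisor-sum expression for `aFun`. -/
def fo (k l : ℕ) (N x : ℤ) : ℤ :=
  (N^(3*l) + N^(2*l) + N^l + 1) * x^(3*k) - (N^(3*k) + N^(2*k) + N^k + 1) * x^(3*l)

/-- The factored form of the paired contribution of divisors `d` and `e = n/d`. -/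
def Wcore (a b c f : ℤ) : ℤ :=
  (a^3 - b^3) * (1 - (c*f)^3) + (a^2*f - b^2*c) * (a*b - (c*f)^2)
    + (a*f^2 - b*c^2) * ((a*b)^2 - c*f) + (f^3 - c^3) * ((a*b)^3 - 1)

lemma fo_pair (k l : ℕ) (d e : ℤ) :
    fo k l (d*e) d + fo k l (d*e) e = Wcore (d^k) (d^l) (e^k) (e^l) := by
  unfold fo Wcore
  rw [pow_mul' (d*e) 3 l, pow_mul' (d*e) 2 l, pow_mul' (d*e) 3 k, pow_mul' (d*e) 2 k,
      pow_mul' d 3 k, pow_mul' d 3 l, pow_mul' e 3 k, pow_mul' e 3 l,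
      mul_pow d e l, mul_pow d e k]
  ring

lemma Wcore_symm (a b c f : ℤ) : Wcore a b c f = Wcore c f a b := by unfold Wcore; ring

lemma W_sum_identity (a b c f : ℤ) :
    Wcore 1 1 (a*c) (b*f) + Wcore a b c f =
      (b^3*((c - a^2)*(c^2 - a)) - (1 + a*c)*(1 + a^2*c^2))*f^3
      + b^2*((1 + a^3)*(1 + c^3))*f^2 + b*((1 + a^3)*(1 + c^3))*f
      + ((c - a^2)*(c^2 - a) - b^3*((1 + a*c)*(1 + a^2*c^2))) := by
  unfold Wcore; ring

lemma E_zero (a b : ℤ) : Wcore 1 1 (a*a^2) (b*b^2) + Wcore a b (a^2) (b^2) = 0 := by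
  unfold Wcore; ring

/-- `(x-y) * x^k ≤ x^(k+1) - y^(k+1)` for `0 ≤ y ≤ x`. -/
lemma sub_mul_pow_le {x y : ℤ} (h0 : 0 ≤ y) (hxy : y ≤ x) :
    ∀ m : ℕ, (x - y) * x^m ≤ x^(m+1) - y^(m+1)
  | 0 => by simp
  | (m+1) => by
      have ih := sub_mul_pow_le h0 hxy m
      have hx : 0 ≤ x := le_trans h0 hxy
      have hY : 0 ≤ y^m := pow_nonneg h0 m
      have e1 : x^(m+1) = x^m * x := pow_succ x m
      have e2 : x^(m+2) = x^m * x * x := by rw [pow_succ, pow_succ]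
      have e3 : y^(m+1) = y^m * y := pow_succ y m
      have e4 : y^(m+2) = y^m * y * y := by rw [pow_succ, pow_succ]
      rw [e1, e2, e4]
      rw [e1, e3] at ih
      nlinarith [mul_le_mul_of_nonneg_left ih hx, mul_nonneg (mul_nonneg hY h0) (sub_nonneg.2 hxy)]

lemma two_le_pow {x : ℤ} (hx : 2 ≤ x) {k : ℕ} (hk : 1 ≤ k) : 2 ≤ x^k := by
  calc (2:ℤ) = 2^1 := by norm_num
    _ ≤ x^1 := by simpa using hx
    _ ≤ x^k := pow_le_pow_right₀ (by linarith) hk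

lemma one_le_pow' {x : ℤ} (hx : 1 ≤ x) (k : ℕ) : 1 ≤ x^k := one_le_pow₀ hx

/-- `d^2 * d^k ≤ d^l` when `k+2 ≤ l`, `1 ≤ d`. -/
lemma sq_mul_pow_le {d : ℤ} (hd : 1 ≤ d) {k l : ℕ} (hkl : k + 2 ≤ l) :
    d^2 * d^k ≤ d^l := by
  have : d^2 * d^k = d^(k+2) := by rw [← pow_add]; ring_nf
  rw [this]
  exact pow_le_pow_right₀ hd (by omega)

/-- From `e ≤ d^2` (with `1 ≤ d,e`, `k ≤ l`): `(d^k)^2 * e^l ≤ (d^l)^2 * e^k`. -/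
lemma mono1 {d e : ℤ} (hd : 1 ≤ d) (he : 1 ≤ e) {k l : ℕ} (hkl : k ≤ l) (h : e ≤ d^2) :
    (d^k)^2 * e^l ≤ (d^l)^2 * e^k := by
  have he0 : (0:ℤ) ≤ e := by linarith
  have hd0 : (0:ℤ) ≤ d := by linarith
  have h1 : e^l = e^k * e^(l-k) := by rw [← pow_add]; congr 1; omega
  have h2 : e^(l-k) ≤ (d^2)^(l-k) := pow_le_pow_left₀ he0 h _
  have h3 : (d^k)^2 * (d^2)^(l-k) = (d^l)^2 := by
    rw [← pow_mul, ← pow_mul, ← pow_add, ← pow_mul]; congr 1; omega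
  calc (d^k)^2 * e^l = ((d^k)^2 * e^(l-k)) * e^k := by rw [h1]; ring
    _ ≤ ((d^k)^2 * (d^2)^(l-k)) * e^k := by
        apply mul_le_mul_of_nonneg_right _ (pow_nonneg he0 k)
        exact mul_le_mul_of_nonneg_left h2 (pow_nonneg (pow_nonneg hd0 k) 2)
    _ = (d^l)^2 * e^k := by rw [h3]

/-- From `d^2 ≤ e`: `(d^l)^2 * e^k ≤ (d^k)^2 * e^l`. -/
lemma mono1' {d e : ℤ} (hd : 1 ≤ d) (he : 1 ≤ e) {k l : ℕ} (hkl : k ≤ l) (h : d^2 ≤ e) :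
    (d^l)^2 * e^k ≤ (d^k)^2 * e^l := by
  have he0 : (0:ℤ) ≤ e := by linarith
  have hd0 : (0:ℤ) ≤ d := by linarith
  have h1 : e^l = e^k * e^(l-k) := by rw [← pow_add]; congr 1; omega
  have h2 : (d^2)^(l-k) ≤ e^(l-k) := pow_le_pow_left₀ (by positivity) h _
  have h3 : (d^k)^2 * (d^2)^(l-k) = (d^l)^2 := by
    rw [← pow_mul, ← pow_mul, ← pow_add, ← pow_mul]; congr 1; omega
  calc (d^l)^2 * e^k = ((d^k)^2 * (d^2)^(l-k)) * e^k := by rw [h3]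
    _ ≤ ((d^k)^2 * e^(l-k)) * e^k := by
        apply mul_le_mul_of_nonneg_right _ (pow_nonneg he0 k)
        exact mul_le_mul_of_nonneg_left h2 (pow_nonneg (pow_nonneg hd0 k) 2)
    _ = (d^k)^2 * e^l := by rw [h1]; ring

/-- From `e ≤ d^2`: `e^k * e^l ≤ (d^k * d^l)^2`. -/
lemma mono2 {d e : ℤ} (hd : 1 ≤ d) (he : 1 ≤ e) {k l : ℕ} (h : e ≤ d^2) :
    e^k * e^l ≤ (d^k * d^l)^2 := by
  have he0 : (0:ℤ) ≤ e := by linarith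
  have h1 : e^k * e^l = e^(k+l) := by rw [← pow_add]
  have h2 : e^(k+l) ≤ (d^2)^(k+l) := pow_le_pow_left₀ he0 h _
  have h3 : (d^2)^(k+l) = (d^k * d^l)^2 := by
    rw [← pow_add, ← pow_mul, ← pow_mul]; congr 1; omega
  rw [h1, ← h3] at *; linarith

/-- From `d^2 ≤ e`: `(d^k * d^l)^2 ≤ e^k * e^l`. -/
lemma mono2' {d e : ℤ} (hd : 1 ≤ d) (he : 1 ≤ e) {k l : ℕ} (h : d^2 ≤ e) :
    (d^k * d^l)^2 ≤ e^k * e^l := by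
  have hd0 : (0:ℤ) ≤ d := by linarith
  have h1 : e^k * e^l = e^(k+l) := by rw [← pow_add]
  have h2 : (d^2)^(k+l) ≤ e^(k+l) := pow_le_pow_left₀ (by positivity) h _
  have h3 : (d^2)^(k+l) = (d^k * d^l)^2 := by
    rw [← pow_add, ← pow_mul, ← pow_mul]; congr 1; omega
  rw [h1, ← h3]; linarith

set_option maxHeartbeats 1000000

lemma mul_nonneg_np {x y : ℤ} (hx : x ≤ 0) (hy : y ≤ 0) : 0 ≤ x * y := by
  nlinarith [mul_nonneg (neg_nonneg.2 hx) (neg_nonneg.2 hy)]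

lemma one_le_cube {x : ℤ} (hx : 1 ≤ x) : 1 ≤ x^3 := one_le_pow₀ hx

lemma cube_le_cube {x y : ℤ} (h0 : 0 ≤ x) (h : x ≤ y) : x^3 ≤ y^3 := pow_le_pow_left₀ h0 h 3

/-- Case `e ≤ d²` and `d ≤ e²`: every term is nonnegative. -/
lemma Wcore_nonneg_mid {a b c f : ℤ}
    (ha : 1 ≤ a) (hab : a ≤ b) (hc : 1 ≤ c) (hcf : c ≤ f)
    (m1 : a^2*f ≤ b^2*c) (m2 : c*f ≤ (a*b)^2)
    (m3 : b*c^2 ≤ a*f^2) (m4 : a*b ≤ (c*f)^2) :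
    0 ≤ Wcore a b c f := by
  unfold Wcore
  have hcf1 : (1:ℤ) ≤ c*f := by nlinarith
  have hab1 : (1:ℤ) ≤ a*b := by nlinarith
  have h1 : 0 ≤ (a^3 - b^3) * (1 - (c*f)^3) := by
    apply mul_nonneg_np
    · have := cube_le_cube (by linarith : (0:ℤ) ≤ a) hab; linarith
    · have := one_le_cube hcf1; linarith
  have h2 : 0 ≤ (a^2*f - b^2*c) * (a*b - (c*f)^2) :=
    mul_nonneg_np (by linarith) (by linarith)
  have h3 : 0 ≤ (a*f^2 - b*c^2) * ((a*b)^2 - c*f) :=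
    mul_nonneg (by linarith) (by linarith)
  have h4 : 0 ≤ (f^3 - c^3) * ((a*b)^3 - 1) := by
    apply mul_nonneg
    · have := cube_le_cube (by linarith : (0:ℤ) ≤ c) hcf; linarith
    · have := one_le_cube hab1; linarith
  linarith

/-- Case `d² < e` : the dominant positive term `t1` wins. -/
lemma Wcore_nonneg_far {a b c f : ℤ}
    (ha : 2 ≤ a) (hb4 : 4*a ≤ b) (hc : 2 ≤ c) (hcf : c ≤ f)
    (m1 : b^2*c ≤ a^2*f) (m2 : (a*b)^2 ≤ c*f)
    (m3 : b*c^2 ≤ a*f^2) (m4 : a*b ≤ (c*f)^2) :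
    0 ≤ Wcore a b c f := by
  unfold Wcore
  have ha0 : (0:ℤ) ≤ a := by linarith
  have hb0 : (0:ℤ) ≤ b := by linarith
  have hc0 : (0:ℤ) ≤ c := by linarith
  have hf0 : (0:ℤ) ≤ f := by linarith
  have ha3 : (0:ℤ) ≤ a^3 := pow_nonneg ha0 3
  have h64 : 64*a^3 ≤ b^3 := by
    have := cube_le_cube (by linarith : (0:ℤ) ≤ 4*a) hb4
    nlinarith [this]
  have hcf2 : 2 ≤ c*f := by nlinarith
  have hcf8 : 8 ≤ (c*f)^3 := by
    have := cube_le_cube (by norm_num : (0:ℤ) ≤ 2) hcf2; norm_num at this; linarith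
  have hab1 : (1:ℤ) ≤ a*b := by nlinarith
  -- t1 lower bound : 4*t1 ≥ b^3 c^3 f^3
  have ht1 : b^3*c^3*f^3 ≤ 4*((b^3 - a^3) * ((c*f)^3 - 1)) := by
    have e1 : b^3 ≤ 2*(b^3 - a^3) := by linarith
    have e2 : (c*f)^3 ≤ 2*((c*f)^3 - 1) := by linarith
    have h := mul_le_mul e1 e2 (by linarith) (by linarith)
    nlinarith [h]
  have et1 : (a^3 - b^3) * (1 - (c*f)^3) = (b^3 - a^3) * ((c*f)^3 - 1) := by ring
  -- |t2| ≤ a^2 c^2 f^3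
  have ht2 : (a^2*f - b^2*c) * ((c*f)^2 - a*b) ≤ a^2*c^2*f^3 := by
    calc (a^2*f - b^2*c) * ((c*f)^2 - a*b) ≤ (a^2*f) * (c*f)^2 := by
          apply mul_le_mul (by nlinarith) (by nlinarith) (by linarith) (by positivity)
      _ = a^2*c^2*f^3 := by ring
  have et2 : (a^2*f - b^2*c) * (a*b - (c*f)^2)
      = -((a^2*f - b^2*c) * ((c*f)^2 - a*b)) := by ring
  -- |t3| ≤ a c f^3
  have ht3 : (a*f^2 - b*c^2) * (c*f - (a*b)^2) ≤ a*c*f^3 := by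
    calc (a*f^2 - b*c^2) * (c*f - (a*b)^2) ≤ (a*f^2) * (c*f) := by
          apply mul_le_mul (by nlinarith) (by nlinarith) (by linarith) (by positivity)
      _ = a*c*f^3 := by ring
  have et3 : (a*f^2 - b*c^2) * ((a*b)^2 - c*f)
      = -((a*f^2 - b*c^2) * (c*f - (a*b)^2)) := by ring
  have ht4 : 0 ≤ (f^3 - c^3) * ((a*b)^3 - 1) := by
    apply mul_nonneg
    · have := cube_le_cube hc0 hcf; linarith
    · have := one_le_cube hab1; linarith
  -- size comparison
  have hf3 : (0:ℤ) ≤ f^3 := pow_nonneg hf0 3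
  have hc2f3 : (0:ℤ) ≤ c^2*f^3 := by positivity
  have ha3c2f3 : (0:ℤ) ≤ a^3*(c^2*f^3) := by positivity
  have s0 : 128*(a^3*(c^2*f^3)) ≤ b^3*c^3*f^3 := by
    have h1 := mul_le_mul_of_nonneg_right h64 hc2f3
    have h2 := mul_le_mul_of_nonneg_right hc ha3c2f3
    have h3 := mul_le_mul_of_nonneg_right h1 hc0
    linarith [h2, h3]
  have hac1 : (1:ℤ) ≤ a*c := by nlinarith
  have s1 : a*c*f^3 ≤ a^2*c^2*f^3 := by
    have h := mul_nonneg (mul_nonneg (mul_nonneg ha0 hc0) hf3) (sub_nonneg.2 hac1)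
    nlinarith [h]
  have s2 : 16*(a^2*c^2*f^3) ≤ 128*(a^3*(c^2*f^3)) := by
    have h := mul_nonneg (mul_nonneg (sq_nonneg a) (by linarith : (0:ℤ) ≤ 8*a - 1)) hc2f3
    nlinarith [h]
  linarith [ht1, ht2, ht3, ht4, s0, s1, s2, et1, et2, et3]

lemma Wcore_nonneg {k l : ℕ} (hk : 1 ≤ k) (hkl : k + 2 ≤ l) {d e : ℤ} (hd : 2 ≤ d) (he : 2 ≤ e) :
    0 ≤ Wcore (d^k) (d^l) (e^k) (e^l) := by
  have hd1 : (1:ℤ) ≤ d := by linarith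
  have he1 : (1:ℤ) ≤ e := by linarith
  have hkl' : k ≤ l := by omega
  have ha2 : 2 ≤ d^k := two_le_pow hd hk
  have hc2 : 2 ≤ e^k := two_le_pow he hk
  have hab : d^k ≤ d^l := pow_le_pow_right₀ hd1 hkl'
  have hcf : e^k ≤ e^l := pow_le_pow_right₀ he1 hkl'
  have hdk0 : (0:ℤ) ≤ d^k := by linarith
  have hek0 : (0:ℤ) ≤ e^k := by linarith
  have hb4 : 4*(d^k) ≤ d^l := by
    have h := sq_mul_pow_le hd1 hkl
    have hd2 : (4:ℤ) ≤ d^2 := by nlinarith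
    have h2 := mul_le_mul_of_nonneg_right hd2 hdk0
    linarith
  have hf4 : 4*(e^k) ≤ e^l := by
    have h := sq_mul_pow_le he1 hkl
    have he2 : (4:ℤ) ≤ e^2 := by nlinarith
    have h2 := mul_le_mul_of_nonneg_right he2 hek0
    linarith
  rcases le_or_gt e (d^2) with h1 | h1
  · rcases le_or_gt d (e^2) with h2 | h2
    · exact Wcore_nonneg_mid (by linarith) hab (by linarith) hcf
        (mono1 hd1 he1 hkl' h1)
        (mono2 hd1 he1 h1)
        (by have := mono1 he1 hd1 hkl' h2; linarith)
        (mono2 he1 hd1 h2)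
    · rw [Wcore_symm]
      exact Wcore_nonneg_far hc2 hf4 ha2 hab
        (by have := mono1' he1 hd1 hkl' (le_of_lt h2); linarith)
        (mono2' he1 hd1 (le_of_lt h2))
        (by have := mono1 hd1 he1 hkl' h1; linarith)
        (mono2 hd1 he1 h1)
  · have hde2 : d ≤ e^2 := by nlinarith
    exact Wcore_nonneg_far ha2 hb4 hc2 hcf
      (mono1' hd1 he1 hkl' (le_of_lt h1))
      (mono2' hd1 he1 (le_of_lt h1))
      (by have := mono1 he1 hd1 hkl' hde2; linarith)
      (mono2 he1 hd1 hde2)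

/-- The pair `{1, n}` contributes negatively. -/
lemma W11_neg {c f : ℤ} (hc : 2 ≤ c) (hcf : c < f) : Wcore 1 1 c f < 0 := by
  unfold Wcore
  nlinarith [mul_pos (by linarith : (0:ℤ) < c) (by linarith : (0:ℤ) < f),
    mul_le_mul (le_refl c) (le_of_lt hcf) (by linarith) (by linarith : (0:ℤ) ≤ c),
    sq_nonneg (c*f), mul_pos (mul_pos (by linarith : (0:ℤ) < c) (by linarith : (0:ℤ) < f))
      (mul_pos (by linarith : (0:ℤ) < c) (by linarith : (0:ℤ) < f))]


lemma V_le {p : ℤ} (hp : 1 ≤ p) : (1+p)*(1+p^2) ≤ 4*p^3 := by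
  nlinarith [mul_nonneg (mul_nonneg (by linarith : (0:ℤ) ≤ p) (by linarith : (0:ℤ) ≤ p)) (sub_nonneg.2 hp),
    mul_nonneg (by linarith : (0:ℤ) ≤ p) (sub_nonneg.2 hp), sub_nonneg.2 hp]

set_option maxHeartbeats 1600000 in
/-- Lemma B: when `n = q*e` with `e > q^2`, the pairs `{1,n}` and `{q,e}` together
contribute positively. -/
lemma lemE_pos {k l : ℕ} (hk : 1 ≤ k) (hkl : k + 2 ≤ l) {q e : ℤ} (hq : 2 ≤ q)
    (he : q^2 + 1 ≤ e) :
    0 < Wcore 1 1 ((q*e)^k) ((q*e)^l) + Wcore (q^k) (q^l) (e^k) (e^l) := by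
  have hq0 : (0:ℤ) ≤ q := by linarith
  have hq1 : (1:ℤ) ≤ q := by linarith
  have he5 : (5:ℤ) ≤ e := by nlinarith
  have he0 : (0:ℤ) ≤ e := by linarith
  have he1 : (1:ℤ) ≤ e := by linarith
  rw [mul_pow q e k, mul_pow q e l, W_sum_identity]
  have hA2 : 2 ≤ q^k := two_le_pow hq hk
  have hC5 : 5 ≤ e^k := by
    calc (5:ℤ) ≤ e := he5
      _ = e^1 := (pow_one e).symm
      _ ≤ e^k := pow_le_pow_right₀ he1 hk
  have hB1 : (1:ℤ) ≤ q^l := one_le_pow' hq1 l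
  have hF1 : (1:ℤ) ≤ e^l := one_le_pow' he1 l
  have hA0 : (0:ℤ) ≤ q^k := by linarith
  have hC0 : (0:ℤ) ≤ e^k := by linarith
  have hB0 : (0:ℤ) ≤ q^l := by linarith
  have hkk : k - 1 + 1 = k := by omega
  have hek1 : (0:ℤ) ≤ e^(k-1) := pow_nonneg he0 _
  have hA2eq : (q^k)^2 = (q^2)^k := by rw [← pow_mul, ← pow_mul]; congr 1; omega
  -- C − A² ≥ (e−q²)·e^(k−1)
  have hCA2 : (e - q^2) * e^(k-1) ≤ e^k - (q^k)^2 := by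
    have h := sub_mul_pow_le (by positivity : (0:ℤ) ≤ q^2) (by linarith : q^2 ≤ e) (k-1)
    rw [hkk] at h
    have h2 : (q^2)^(k-1+1) = (q^k)^2 := by rw [hkk, ← hA2eq]
    rw [hkk] at h2
    linarith [h, h2.ge, h2.le]
  have heq2 : (0:ℤ) ≤ e - q^2 := by linarith
  have hCA2nn : (0:ℤ) ≤ e^k - (q^k)^2 := le_trans (mul_nonneg heq2 hek1) hCA2
  -- A ≤ C − 1
  have hqe1 : q ≤ e - 1 := by nlinarith
  have hACm : q^k ≤ e^k - 1 := by
    have h1 : q^k ≤ (e-1)^k := pow_le_pow_left₀ hq0 hqe1 k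
    have h2 : (e-1)^k ≤ e^k - 1 := by
      have h := sub_mul_pow_le (show (0:ℤ) ≤ e - 1 by linarith) (show e - 1 ≤ e by linarith) (k-1)
      rw [hkk] at h
      have h3 : 1 ≤ e^(k-1) := one_le_pow' he1 _
      nlinarith [h, h3]
    linarith
  have hC2A : (0:ℤ) ≤ (e^k)^2 - q^k := by nlinarith
  have f2 : 4*(e^k)^2 ≤ 5*((e^k)^2 - q^k) := by nlinarith [hC5, hACm]
  -- B³ ≥ q⁶ A³
  have f3 : q^6*(q^k)^3 ≤ (q^l)^3 := by
    have h1 : q^2*q^k ≤ q^l := sq_mul_pow_le hq1 hkl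
    have h2 := pow_le_pow_left₀ (by positivity : (0:ℤ) ≤ q^2*q^k) h1 3
    nlinarith [h2]
  -- q⁶(e−q²) ≥ 10e
  have hq2 : (4:ℤ) ≤ q^2 := by nlinarith
  have hq4 : (16:ℤ) ≤ q^4 := by nlinarith [sq_nonneg (q^2 - 4)]
  have hq6 : (64:ℤ) ≤ q^6 := by nlinarith [mul_le_mul hq2 hq4 (by norm_num) (by positivity)]
  have f4 : 10*e ≤ q^6*(e - q^2) := by
    have key : 0 ≤ (q^6 - 10)*(e - q^2 - 1) := mul_nonneg (by linarith) (by linarith)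
    nlinarith [key, mul_le_mul_of_nonneg_left hq4 (by positivity : (0:ℤ) ≤ q^2)]
  -- 10 C ≤ q⁶ (C − A²)
  have heC : e * e^(k-1) = e^k := by
    conv_rhs => rw [← hkk]
    rw [pow_succ']
  have s1 : q^6*((e-q^2)*e^(k-1)) ≤ q^6*(e^k - (q^k)^2) :=
    mul_le_mul_of_nonneg_left hCA2 (by positivity)
  have s2 : 10*e*e^(k-1) ≤ q^6*(e-q^2)*e^(k-1) := mul_le_mul_of_nonneg_right f4 hek1
  have hq6C : 10*e^k ≤ q^6*(e^k - (q^k)^2) := by nlinarith [s1, s2, heC]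
  -- 8 A³C³ ≤ B³ U
  have u1 : (10*e^k)*(4*(e^k)^2) ≤ (q^6*(e^k - (q^k)^2))*(5*((e^k)^2 - q^k)) :=
    mul_le_mul hq6C f2 (by positivity) (le_trans (by positivity) hq6C)
  have u2 : 8*(e^k)^3 ≤ q^6*((e^k - (q^k)^2)*((e^k)^2 - q^k)) := by nlinarith [u1]
  have hU0 : (0:ℤ) ≤ (e^k - (q^k)^2)*((e^k)^2 - q^k) := mul_nonneg hCA2nn hC2A
  have u3 : 8*((q^k)^3*(e^k)^3) ≤ (q^l)^3*((e^k - (q^k)^2)*((e^k)^2 - q^k)) := by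
    have w1 := mul_le_mul_of_nonneg_left u2 (by positivity : (0:ℤ) ≤ (q^k)^3)
    have w2 := mul_le_mul_of_nonneg_right f3 hU0
    nlinarith [w1, w2]
  -- V ≤ 4 A³C³
  have hAC1 : (1:ℤ) ≤ q^k*e^k := by nlinarith
  have hACnn : (0:ℤ) ≤ q^k*e^k := by linarith
  have hV : (1 + q^k*e^k)*(1 + (q^k)^2*(e^k)^2) ≤ 4*((q^k)^3*(e^k)^3) := by
    have h := V_le hAC1
    calc (1 + q^k*e^k)*(1 + (q^k)^2*(e^k)^2) = (1+(q^k*e^k))*(1+(q^k*e^k)^2) := by ring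
      _ ≤ 4*(q^k*e^k)^3 := h
      _ = 4*((q^k)^3*(e^k)^3) := by ring
  have hV1 : (1:ℤ) ≤ (1 + q^k*e^k)*(1 + (q^k)^2*(e^k)^2) := by nlinarith [sq_nonneg (q^k*e^k)]
  -- B < F
  have hqe : q < e := by nlinarith
  have hBF : q^l + 1 ≤ e^l := by
    have := pow_lt_pow_left₀ hqe hq0 (by omega : l ≠ 0)
    linarith
  have hF3 : (q^l)^3 + 1 ≤ (e^l)^3 := by
    have := pow_lt_pow_left₀ (show q^l < e^l by linarith) hB0 (by norm_num : 3 ≠ 0)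
    linarith
  -- final assembly
  have hP0 : (0:ℤ) ≤ (1 + (q^k)^3)*(1 + (e^k)^3) := by positivity
  have hF0 : (0:ℤ) ≤ e^l := by linarith
  have hc3 : (1 + q^k*e^k)*(1 + (q^k)^2*(e^k)^2)
      ≤ (q^l)^3*((e^k - (q^k)^2)*((e^k)^2 - q^k)) - (1 + q^k*e^k)*(1 + (q^k)^2*(e^k)^2) := by
    linarith [u3, hV]
  have m1 : ((1 + q^k*e^k)*(1 + (q^k)^2*(e^k)^2)) * (e^l)^3
      ≤ ((q^l)^3*((e^k - (q^k)^2)*((e^k)^2 - q^k)) - (1 + q^k*e^k)*(1 + (q^k)^2*(e^k)^2)) * (e^l)^3 :=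
    mul_le_mul_of_nonneg_right hc3 (by positivity)
  have m2 : ((1 + q^k*e^k)*(1 + (q^k)^2*(e^k)^2)) * ((q^l)^3 + 1)
      ≤ ((1 + q^k*e^k)*(1 + (q^k)^2*(e^k)^2)) * (e^l)^3 :=
    mul_le_mul_of_nonneg_left hF3 (by linarith)
  have m3 : (0:ℤ) ≤ (q^l)^2*((1 + (q^k)^3)*(1 + (e^k)^3))*(e^l)^2 := by positivity
  have m4 : (0:ℤ) ≤ (q^l)*((1 + (q^k)^3)*(1 + (e^k)^3))*(e^l) := by positivity
  linarith [m1, m2, m3, m4, hU0, hV1,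
    mul_le_mul_of_nonneg_left hU0 (by positivity : (0:ℤ) ≤ (q^l)^3)]


lemma one_le_mul' {x y : ℤ} (hx : 1 ≤ x) (hy : 1 ≤ y) : 1 ≤ x*y := by nlinarith

/-- Final assembly for the negative case, given the key inequality. -/
lemma Epoly_neg {A B C F : ℤ} (hB0 : 0 ≤ B) (hF1 : 1 ≤ F)
    (hP0 : 0 ≤ (1+A^3)*(1+C^3)) (hBF1 : 1 ≤ B*F)
    (hV0 : 0 ≤ (1+A*C)*(1+A^2*C^2)) (hU'0 : 0 ≤ (A^2-C)*(C^2-A))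
    (hKey : 2*B^2*((1+A^3)*(1+C^3)) + 1 ≤ ((1+A*C)*(1+A^2*C^2) + B^3*((A^2-C)*(C^2-A)))*F) :
    (B^3*((C - A^2)*(C^2 - A)) - (1 + A*C)*(1 + A^2*C^2))*F^3
      + B^2*((1 + A^3)*(1 + C^3))*F^2 + B*((1 + A^3)*(1 + C^3))*F
      + ((C - A^2)*(C^2 - A) - B^3*((1 + A*C)*(1 + A^2*C^2))) < 0 := by
  have hF0 : (0:ℤ) ≤ F := by linarith
  have hF2 : (1:ℤ) ≤ F^2 := one_le_pow' hF1 2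
  have n1 := mul_le_mul_of_nonneg_right hKey (by positivity : (0:ℤ) ≤ F^2)
  have n2 : 0 ≤ B*((1+A^3)*(1+C^3))*F*(B*F - 1) :=
    mul_nonneg (mul_nonneg (mul_nonneg hB0 hP0) hF0) (by linarith)
  have n3 : 0 ≤ B^3*((1+A*C)*(1+A^2*C^2)) := mul_nonneg (pow_nonneg hB0 3) hV0
  linarith [n1, n2, n3, hU'0, hF2]

/-- Abstract key inequality, main case `r ≥ 3`. -/
lemma key_neg_main {A B C F q r : ℤ} (hA2 : 2 ≤ A) (hC2 : 2 ≤ C) (hB1 : 1 ≤ B) (hF1 : 1 ≤ F)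
    (hU1 : 0 ≤ A^2 - C) (hU2 : 0 ≤ C^2 - A)
    (G1 : A^2 ≤ q^2*(A^2-C)) (G2 : C^2 ≤ 2*(C^2-A)) (G3 : q^2*A ≤ B) (G3' : r^2*C ≤ F)
    (hr9 : 9 ≤ r^2) :
    2*B^2*((1+A^3)*(1+C^3)) + 1
      ≤ ((1+A*C)*(1+A^2*C^2) + B^3*((A^2-C)*(C^2-A)))*F := by
  have hA0 : (0:ℤ) ≤ A := by linarith
  have hC0 : (0:ℤ) ≤ C := by linarith
  have hB0 : (0:ℤ) ≤ B := by linarith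
  have hF0 : (0:ℤ) ≤ F := by linarith
  have hU0 : (0:ℤ) ≤ (A^2-C)*(C^2-A) := mul_nonneg hU1 hU2
  have hA38 : (8:ℤ) ≤ A^3 := by nlinarith
  have hC38 : (8:ℤ) ≤ C^3 := by nlinarith
  have hP : 64*((1+A^3)*(1+C^3)) ≤ 81*(A^3*C^3) := by nlinarith [hA38, hC38]
  have hPmul := mul_le_mul_of_nonneg_left hP (by positivity : (0:ℤ) ≤ 2*B^2)
  have w4 : A^2*C^2 ≤ (q^2*(A^2-C))*(2*(C^2-A)) :=
    mul_le_mul G1 G2 (by positivity) (le_trans (by positivity) G1)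
  have t1 : B^2*(q^2*A) ≤ B^3 := by nlinarith [mul_le_mul_of_nonneg_left G3 (sq_nonneg B)]
  have w1 : (B^2*(q^2*A))*((A^2-C)*(C^2-A)) ≤ B^3*((A^2-C)*(C^2-A)) :=
    mul_le_mul_of_nonneg_right t1 hU0
  have w2 : (B^3*((A^2-C)*(C^2-A)))*(r^2*C) ≤ (B^3*((A^2-C)*(C^2-A)))*F :=
    mul_le_mul_of_nonneg_left G3' (mul_nonneg (pow_nonneg hB0 3) hU0)
  have w3 : ((B^2*(q^2*A))*((A^2-C)*(C^2-A)))*(r^2*C)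
      ≤ (B^3*((A^2-C)*(C^2-A)))*(r^2*C) :=
    mul_le_mul_of_nonneg_right w1 (mul_nonneg (sq_nonneg r) hC0)
  have w5 : (A^2*C^2)*(B^2*(A*(C*r^2))) ≤ ((q^2*(A^2-C))*(2*(C^2-A)))*(B^2*(A*(C*r^2))) :=
    mul_le_mul_of_nonneg_right w4 (by positivity)
  have w6 : 9*(A^3*C^3*B^2) ≤ r^2*(A^3*C^3*B^2) :=
    mul_le_mul_of_nonneg_right hr9 (by positivity)
  have hX1 : (1:ℤ) ≤ A^3*C^3*B^2 :=
    one_le_mul' (one_le_mul' (by linarith) (by linarith)) (one_le_pow' hB1 2)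
  have hVF : (0:ℤ) ≤ ((1+A*C)*(1+A^2*C^2))*F := by positivity
  linarith [w2, w3, w5, w6, hPmul, hX1, hVF]

/-- Abstract key inequality, special case `q = r = 2`. -/
lemma key_neg_22 {A B : ℤ} (hA2 : 2 ≤ A) (hB4 : 4*A ≤ B) :
    2*B^2*((1+A^3)*(1+A^3)) + 1
      ≤ ((1+A*A)*(1+A^2*A^2) + B^3*((A^2-A)*(A^2-A)))*B := by
  have hA0 : (0:ℤ) ≤ A := by linarith
  have hB0 : (0:ℤ) ≤ B := by linarith
  have hB1 : (1:ℤ) ≤ B := by linarith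
  have hBsq : 16*A^2 ≤ B^2 := by nlinarith [pow_le_pow_left₀ (by linarith : (0:ℤ) ≤ 4*A) hB4 2]
  have hB4' : 16*A^2*B^2 ≤ B^2*B^2 := mul_le_mul_of_nonneg_right hBsq (sq_nonneg B)
  have hAA : A^2 ≤ 2*(A^2-A) := by nlinarith
  have hAA2 : A^2*A^2 ≤ (2*(A^2-A))*(2*(A^2-A)) :=
    mul_le_mul hAA hAA (by positivity) (le_trans (by positivity) hAA)
  have hQ := mul_le_mul hB4' hAA2 (by positivity)
    (mul_nonneg (sq_nonneg B) (sq_nonneg B))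
  have hA38 : (8:ℤ) ≤ A^3 := by nlinarith
  have hP : 64*((1+A^3)*(1+A^3)) ≤ 81*(A^3*A^3) := by nlinarith [hA38]
  have hPmul := mul_le_mul_of_nonneg_left hP (by positivity : (0:ℤ) ≤ 2*B^2)
  have hX1 : (1:ℤ) ≤ A^3*A^3*B^2 :=
    one_le_mul' (one_le_mul' (by linarith) (by linarith)) (one_le_pow' hB1 2)
  have hVB : (0:ℤ) ≤ ((1+A*A)*(1+A^2*A^2))*B := by positivity
  linarith [hQ, hPmul, hX1, hVB]

set_option maxHeartbeats 1600000 in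
/-- Lemma C: when `n = q*r` with `q ≤ r ≤ q^2 - 1`, the total contribution is negative. -/
lemma lemE_neg {k l : ℕ} (hk : 1 ≤ k) (hkl : k + 2 ≤ l) {q r : ℤ} (hq : 2 ≤ q)
    (hqr : q ≤ r) (hr : r ≤ q^2 - 1) :
    Wcore 1 1 ((q*r)^k) ((q*r)^l) + Wcore (q^k) (q^l) (r^k) (r^l) < 0 := by
  have hq0 : (0:ℤ) ≤ q := by linarith
  have hq1 : (1:ℤ) ≤ q := by linarith
  have hr2 : (2:ℤ) ≤ r := by linarith
  have hr0 : (0:ℤ) ≤ r := by linarith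
  have hr1 : (1:ℤ) ≤ r := by linarith
  rw [mul_pow q r k, mul_pow q r l, W_sum_identity]
  have hkk : k - 1 + 1 = k := by omega
  have hA2 : 2 ≤ q^k := two_le_pow hq hk
  have hC2 : 2 ≤ r^k := two_le_pow hr2 hk
  have hB1 : (1:ℤ) ≤ q^l := one_le_pow' hq1 l
  have hF1 : (1:ℤ) ≤ r^l := one_le_pow' hr1 l
  have hB0 : (0:ℤ) ≤ q^l := by linarith
  have hAC : q^k ≤ r^k := pow_le_pow_left₀ hq0 hqr k
  have hA2eq : (q^k)^2 = (q^2)^k := by rw [← pow_mul, ← pow_mul]; congr 1; omega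
  -- G1 : A² ≤ q²(A² − C)
  have hq21 : (0:ℤ) ≤ q^2 - 1 := by nlinarith
  have c1 : r^k ≤ (q^2-1)^k := pow_le_pow_left₀ hr0 (by linarith) k
  have c2 : (q^2-1)^(k-1) ≤ (q^2)^(k-1) := pow_le_pow_left₀ hq21 (by linarith) _
  have c3 : (q^2-1)^k = (q^2-1)^(k-1)*(q^2-1) := by
    conv_lhs => rw [← hkk]
    rw [pow_succ]
  have c4 : (q^2)^k = (q^2)^(k-1)*(q^2) := by
    conv_lhs => rw [← hkk]
    rw [pow_succ]
  have c5 : (q^2-1)^(k-1)*(q^2-1) ≤ (q^2)^(k-1)*(q^2-1) := mul_le_mul_of_nonneg_right c2 hq21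
  have c6 : (q^2)^(k-1) ≤ (q^k)^2 - r^k := by
    rw [hA2eq]
    linarith [c1, c3.le, c3.ge, c4.le, c4.ge, c5]
  have G1 : (q^k)^2 ≤ q^2*((q^k)^2 - r^k) := by
    have h := mul_le_mul_of_nonneg_left c6 (by positivity : (0:ℤ) ≤ q^2)
    have c7 : q^2*(q^2)^(k-1) = (q^k)^2 := by rw [hA2eq, c4]; ring
    linarith
  have hU1 : (0:ℤ) ≤ (q^k)^2 - r^k := by
    have h0 : (0:ℤ) ≤ (q^2)^(k-1) := by positivity
    linarith [c6]
  have G2 : (r^k)^2 ≤ 2*((r^k)^2 - q^k) := by nlinarith [hAC, hC2]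
  have hU2 : (0:ℤ) ≤ (r^k)^2 - q^k := by nlinarith [hAC, hC2]
  have hU'0 : (0:ℤ) ≤ ((q^k)^2 - r^k)*((r^k)^2 - q^k) := mul_nonneg hU1 hU2
  have G3 : q^2*q^k ≤ q^l := sq_mul_pow_le hq1 hkl
  have G3' : r^2*r^k ≤ r^l := sq_mul_pow_le hr1 hkl
  have hP0 : (0:ℤ) ≤ (1+(q^k)^3)*(1+(r^k)^3) := by positivity
  have hV0 : (0:ℤ) ≤ (1+(q^k)*(r^k))*(1+(q^k)^2*(r^k)^2) := by positivity
  have hBF1 : (1:ℤ) ≤ (q^l)*(r^l) := one_le_mul' hB1 hF1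
  have hKey : 2*(q^l)^2*((1+(q^k)^3)*(1+(r^k)^3)) + 1
      ≤ ((1+(q^k)*(r^k))*(1+(q^k)^2*(r^k)^2) + (q^l)^3*(((q^k)^2 - r^k)*((r^k)^2 - q^k)))*(r^l) := by
    rcases le_or_gt 3 r with hr3 | hr3
    · have hr9 : (9:ℤ) ≤ r^2 := by nlinarith
      exact key_neg_main hA2 hC2 hB1 hF1 hU1 hU2 G1 G2 G3 G3' hr9
    · have hre : r = 2 := by omega
      have hqe : q = 2 := by omega
      subst hre
      subst hqe
      have hb4 : 4*(2:ℤ)^k ≤ 2^l := by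
        have h := G3; norm_num at h; linarith
      exact key_neg_22 hA2 hb4
  exact Epoly_neg hB0 hF1 hP0 hBF1 hV0 hU'0 hKey


/-- The paired summand over divisors. -/
def g (k l n : ℕ) (d : ℕ) : ℤ := fo k l (n:ℤ) (d:ℤ) + fo k l (n:ℤ) ((n/d : ℕ) : ℤ)

lemma aFun_eq_sum (k l n : ℕ) : aFun k l n = ∑ d ∈ n.divisors, fo k l (n:ℤ) (d:ℤ) := by
  unfold aFun sigmaZ fo
  rw [Finset.mul_sum, Finset.mul_sum, ← Finset.sum_sub_distrib]

lemma two_mul_aFun (k l n : ℕ) : 2 * aFun k l n = ∑ d ∈ n.divisors, g k l n d := by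
  unfold g
  rw [Finset.sum_add_distrib, Nat.sum_div_divisors n (fun d => fo k l (n:ℤ) (d:ℤ)),
    ← aFun_eq_sum]
  ring

lemma g_eq (k l : ℕ) {n d : ℕ} (hd : d ∣ n) :
    g k l n d = Wcore ((d:ℤ)^k) ((d:ℤ)^l) (((n/d : ℕ):ℤ)^k) (((n/d : ℕ):ℤ)^l) := by
  have h : (d:ℤ) * ((n/d : ℕ):ℤ) = (n:ℤ) := by exact_mod_cast Nat.mul_div_cancel' hd
  unfold g
  rw [← h]
  exact fo_pair k l _ _

lemma g_one (k l : ℕ) (n : ℕ) : g k l n 1 = Wcore 1 1 ((n:ℤ)^k) ((n:ℤ)^l) := by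
  have h := g_eq k l (one_dvd n)
  simpa using h

lemma g_self (k l : ℕ) {n : ℕ} (hn : n ≠ 0) : g k l n n = g k l n 1 := by
  unfold g
  rw [Nat.div_self (Nat.pos_of_ne_zero hn), Nat.div_one]
  push_cast
  ring

lemma g_nonneg (k l : ℕ) (hk : 1 ≤ k) (hkl : k + 2 ≤ l) {n d : ℕ} (hd : d ∈ n.divisors)
    (h1 : d ≠ 1) (h2 : d ≠ n) : 0 ≤ g k l n d := by
  obtain ⟨hdvd, hn⟩ := Nat.mem_divisors.1 hd
  have hdpos : 0 < d := Nat.pos_of_mem_divisors hd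
  have hd2 : 2 ≤ d := by omega
  have hq : d * (n / d) = n := Nat.mul_div_cancel' hdvd
  have hnd1 : n / d ≠ 1 := by
    intro h; rw [h, mul_one] at hq; exact h2 hq
  have hndpos : 0 < n / d := Nat.div_pos (Nat.le_of_dvd (Nat.pos_of_ne_zero hn) hdvd) hdpos
  have hnd2 : 2 ≤ n / d := by omega
  rw [g_eq k l hdvd]
  exact Wcore_nonneg hk hkl (by exact_mod_cast hd2) (by exact_mod_cast hnd2)

/-- Divisors of a product of two primes. -/
lemma dvd_prime_mul {q r d : ℕ} (hq : q.Prime) (hr : r.Prime) (h : d ∣ q * r) :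
    d = 1 ∨ d = q ∨ d = r ∨ d = q * r := by
  by_cases hqd : q ∣ d
  · obtain ⟨t, rfl⟩ := hqd
    have ht : t ∣ r := (mul_dvd_mul_iff_left hq.pos.ne').1 h
    rcases (Nat.Prime.eq_one_or_self_of_dvd hr t ht) with h1 | h1
    · right; left; rw [h1, mul_one]
    · right; right; right; rw [h1]
  · have hco : d.Coprime q := (Nat.coprime_comm).1 (hq.coprime_iff_not_dvd.2 hqd)
    have : d ∣ r := Nat.Coprime.dvd_of_dvd_mul_left hco h
    rcases (Nat.Prime.eq_one_or_self_of_dvd hr d this) with h1 | h1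
    · left; exact h1
    · right; right; left; exact h1

lemma minFac_le_of_dvd' {n m : ℕ} (hm : 2 ≤ m) (h : m ∣ n) : n.minFac ≤ m := by
  calc n.minFac ≤ m.minFac := Nat.minFac_le_of_dvd (Nat.minFac_prime (by omega)).two_le
        ((Nat.minFac_dvd m).trans h)
    _ ≤ m := Nat.minFac_le (by omega)

/-- Case n > q³ : `aFun` is positive. -/
lemma aFun_pos (k l n : ℕ) (hk : 1 ≤ k) (hkl : k + 2 ≤ l) (hn : 2 ≤ n)
    (hgt : (n.minFac)^3 < n) : 0 < aFun k l n := by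
  set q := n.minFac with hqdef
  have hn0 : n ≠ 0 := by omega
  have hqp : q.Prime := Nat.minFac_prime (by omega)
  have hq2 : 2 ≤ q := hqp.two_le
  have hqdvd : q ∣ n := Nat.minFac_dvd n
  set e := n / q with hedef
  have hmul : q * e = n := Nat.mul_div_cancel' hqdvd
  have hegt : q^2 < e := by
    have h1 : q*q^2 < q*e := by
      calc q*q^2 = q^3 := by ring
        _ < n := hgt
        _ = q*e := hmul.symm
    exact Nat.lt_of_mul_lt_mul_left h1
  have hqsq : q ≤ q^2 := Nat.le_self_pow (by norm_num) q
  have hq_lt_e : q < e := by omega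
  have he2 : 2 ≤ e := by omega
  have he_lt_n : e < n := by
    have h2e : 2*e ≤ q*e := Nat.mul_le_mul_right e hq2
    omega
  have h1q : 1 < q := by omega
  have hedvd : e ∣ n := ⟨q, by rw [← hmul, mul_comm]⟩
  -- the four distinguished divisors
  have hT : ({1, q, e, n} : Finset ℕ) ⊆ n.divisors := by
    intro x hx
    simp only [Finset.mem_insert, Finset.mem_singleton] at hx
    rcases hx with rfl | rfl | rfl | rfl
    · exact Nat.one_mem_divisors.2 hn0
    · exact Nat.mem_divisors.2 ⟨hqdvd, hn0⟩
    · exact Nat.mem_divisors.2 ⟨hedvd, hn0⟩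
    · exact Nat.mem_divisors_self _ hn0
  have hsdiff := Finset.sum_sdiff (f := g k l n) hT
  have hrest : 0 ≤ ∑ d ∈ n.divisors \ {1, q, e, n}, g k l n d := by
    apply Finset.sum_nonneg
    intro d hd
    rw [Finset.mem_sdiff] at hd
    obtain ⟨hdd, hdnot⟩ := hd
    simp only [Finset.mem_insert, Finset.mem_singleton] at hdnot
    push_neg at hdnot
    exact g_nonneg k l hk hkl hdd hdnot.1 hdnot.2.2.2
  have hTsum : ∑ d ∈ ({1, q, e, n} : Finset ℕ), g k l n d
      = g k l n 1 + g k l n q + g k l n e + g k l n n := by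
    rw [Finset.sum_insert (by
        simp only [Finset.mem_insert, Finset.mem_singleton]; push_neg; omega),
      Finset.sum_insert (by
        simp only [Finset.mem_insert, Finset.mem_singleton]; push_neg; omega),
      Finset.sum_insert (by simp only [Finset.mem_singleton]; omega), Finset.sum_singleton]
    ring
  -- identify the terms
  have hge : g k l n e = g k l n q := by
    unfold g
    have : n / e = q := by rw [hedef]; exact Nat.div_div_self hqdvd hn0
    rw [this, hedef]
    ring
  have hgq : g k l n q = Wcore ((q:ℤ)^k) ((q:ℤ)^l) ((e:ℤ)^k) ((e:ℤ)^l) := by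
    have := g_eq k l hqdvd
    rw [← hedef] at this
    exact this
  have hpos : 0 < g k l n 1 + g k l n q := by
    rw [g_one, hgq]
    have hcast : (n:ℤ) = (q:ℤ)*(e:ℤ) := by exact_mod_cast hmul.symm
    rw [hcast]
    exact lemE_pos hk hkl (by exact_mod_cast hq2) (by exact_mod_cast hegt)
  have h2a := two_mul_aFun k l n
  have hgs := g_self k l hn0
  linarith [hsdiff, hrest, hTsum, hpos, h2a, hgs, hge]


/-- Case n < q³ : `aFun` is negative. -/
lemma aFun_neg (k l n : ℕ) (hk : 1 ≤ k) (hkl : k + 2 ≤ l) (hn : 2 ≤ n)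
    (hlt : n < (n.minFac)^3) : aFun k l n < 0 := by
  set q := n.minFac with hqdef
  have hn0 : n ≠ 0 := by omega
  have hqp : q.Prime := Nat.minFac_prime (by omega)
  have hq2 : 2 ≤ q := hqp.two_le
  have hqdvd : q ∣ n := Nat.minFac_dvd n
  set r := n / q with hrdef
  have hmul : q * r = n := Nat.mul_div_cancel' hqdvd
  have hrlt : r < q^2 := by
    by_contra hcon
    push_neg at hcon
    have : q*q^2 ≤ q*r := Nat.mul_le_mul_left q hcon
    have h3 : q^3 = q*q^2 := by ring
    omega
  have hg1neg : g k l n 1 < 0 := by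
    rw [g_one]
    refine W11_neg (two_le_pow (by exact_mod_cast hn) hk) ?_
    have h1n : (1:ℤ) < (n:ℤ) := by exact_mod_cast hn
    exact pow_lt_pow_right₀ h1n (by omega)
  have h2a := two_mul_aFun k l n
  rcases Nat.lt_or_ge r 2 with hr1 | hr2
  · -- r = 1, n = q prime
    have hr1' : r = 1 := by
      have : 0 < r := Nat.div_pos (Nat.minFac_le (by omega)) hqp.pos
      omega
    have hnq : n = q := by rw [← hmul, hr1', mul_one]
    have hdivs : n.divisors = {1, n} := by rw [hnq]; exact hqp.divisors
    rw [hdivs, Finset.sum_insert (by simp only [Finset.mem_singleton]; omega),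
      Finset.sum_singleton, g_self k l hn0] at h2a
    linarith
  · have hqr : q ≤ r := minFac_le_of_dvd' hr2 ⟨q, by rw [← hmul, mul_comm]⟩
    have hrP : r.Prime := by
      by_contra hnp
      obtain ⟨m, hmdvd, hm1, hmr⟩ := Nat.exists_dvd_of_not_prime hr2 hnp
      have hmpos : 0 < m := Nat.pos_of_dvd_of_pos hmdvd (by omega)
      have hm2 : 2 ≤ m := by omega
      set s := r / m with hsdef
      have hms : m * s = r := Nat.mul_div_cancel' hmdvd
      have hs1 : s ≠ 1 := by intro h; rw [h, mul_one] at hms; exact hmr hms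
      have hspos : 0 < s := by
        rcases Nat.eq_zero_or_pos s with h | h
        · rw [h, mul_zero] at hms; omega
        · exact h
      have hs2 : 2 ≤ s := by omega
      have hmq : q ≤ m := minFac_le_of_dvd' hm2 (hmdvd.trans ⟨q, by rw [← hmul, mul_comm]⟩)
      have hsr : s ∣ r := ⟨m, by rw [← hms, mul_comm]⟩
      have hsq : q ≤ s := minFac_le_of_dvd' hs2 (hsr.trans ⟨q, by rw [← hmul, mul_comm]⟩)
      have : q*q ≤ m*s := Nat.mul_le_mul hmq hsq
      have hq2' : q^2 = q*q := by ring
      omega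
    have hrcast : ((r:ℤ)) ≤ (q:ℤ)^2 - 1 := by
      have : r + 1 ≤ q^2 := by omega
      have hc : ((r:ℕ):ℤ) + 1 ≤ ((q^2 : ℕ):ℤ) := by exact_mod_cast this
      push_cast at hc
      linarith
    have hEneg := lemE_neg (k := k) (l := l) hk hkl (by exact_mod_cast hq2 : (2:ℤ) ≤ (q:ℤ))
      (by exact_mod_cast hqr) hrcast
    have hncast : (n:ℤ) = (q:ℤ)*(r:ℤ) := by exact_mod_cast hmul.symm
    have hgq : g k l n q = Wcore ((q:ℤ)^k) ((q:ℤ)^l) ((r:ℤ)^k) ((r:ℤ)^l) := by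
      have := g_eq k l hqdvd
      rw [← hrdef] at this
      exact this
    have hsum_neg : g k l n 1 + g k l n q < 0 := by
      rw [g_one, hgq, hncast]
      exact hEneg
    rcases eq_or_lt_of_le hqr with heq | hlt'
    · -- n = q^2
      have hdivs : n.divisors = {1, q, n} := by
        ext x
        simp only [Nat.mem_divisors, Finset.mem_insert, Finset.mem_singleton]
        constructor
        · rintro ⟨hdvd, -⟩
          rw [← hmul, ← heq] at hdvd
          rcases dvd_prime_mul hqp hqp hdvd with h | h | h | h
          · exact Or.inl h
          · exact Or.inr (Or.inl h)
          · exact Or.inr (Or.inl h)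
          · right; right; rw [h, ← hmul, heq]
        · rintro (rfl | rfl | rfl)
          · exact ⟨one_dvd n, hn0⟩
          · exact ⟨hqdvd, hn0⟩
          · exact ⟨dvd_rfl, hn0⟩
      have hqn : q < n := by
        have h2r : 2*r ≤ q*r := Nat.mul_le_mul_right r hq2
        omega
      rw [hdivs, Finset.sum_insert (by
          simp only [Finset.mem_insert, Finset.mem_singleton]; push_neg; omega),
        Finset.sum_insert (by simp only [Finset.mem_singleton]; omega),
        Finset.sum_singleton, g_self k l hn0] at h2a
      linarith
    · -- q < r, n = q*r with distinct primes
      have hrn : r < n := by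
        have h2r : 2*r ≤ q*r := Nat.mul_le_mul_right r hq2
        omega
      have hdivs : n.divisors = {1, q, r, n} := by
        ext x
        simp only [Nat.mem_divisors, Finset.mem_insert, Finset.mem_singleton]
        constructor
        · rintro ⟨hdvd, -⟩
          rw [← hmul] at hdvd
          rcases dvd_prime_mul hqp hrP hdvd with h | h | h | h
          · exact Or.inl h
          · exact Or.inr (Or.inl h)
          · exact Or.inr (Or.inr (Or.inl h))
          · right; right; right; rw [h, hmul]
        · rintro (rfl | rfl | rfl | rfl)
          · exact ⟨one_dvd n, hn0⟩
          · exact ⟨hqdvd, hn0⟩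
          · exact ⟨⟨q, by rw [← hmul, mul_comm]⟩, hn0⟩
          · exact ⟨dvd_rfl, hn0⟩
      have hgr : g k l n r = g k l n q := by
        unfold g
        have hnr : n / r = q := by
          rw [← hmul, mul_comm]
          exact Nat.mul_div_cancel_left _ (by omega)
        rw [hnr, ← hrdef]
        ring
      rw [hdivs, Finset.sum_insert (by
          simp only [Finset.mem_insert, Finset.mem_singleton]; push_neg; omega),
        Finset.sum_insert (by
          simp only [Finset.mem_insert, Finset.mem_singleton]; push_neg; omega),
        Finset.sum_insert (by simp only [Finset.mem_singleton]; omega),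
        Finset.sum_singleton, g_self k l hn0] at h2a
      linarith

/-- Prime cubes give zero. -/
lemma aFun_cube (k l p : ℕ) (hk : 1 ≤ k) (hkl : k + 2 ≤ l) (hp : p.Prime) :
    aFun k l (p^3) = 0 := by
  set n := p^3 with hndef
  have hp2 : 2 ≤ p := hp.two_le
  have hn0 : n ≠ 0 := by positivity
  have hpn : p < p^2 := by nlinarith
  have hp2n : p^2 < p^3 := by nlinarith
  have hpdvd : p ∣ n := dvd_pow_self p (by norm_num)
  have hp2dvd : p^2 ∣ n := pow_dvd_pow p (by norm_num)
  have hdivs : n.divisors = {1, p, p^2, n} := by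
    ext x
    simp only [Nat.mem_divisors, Finset.mem_insert, Finset.mem_singleton]
    constructor
    · rintro ⟨hdvd, -⟩
      obtain ⟨i, hi, rfl⟩ := (Nat.dvd_prime_pow hp).1 hdvd
      interval_cases i
      · simp
      · simp
      · simp
      · simp [hndef]
    · rintro (rfl | rfl | rfl | rfl)
      · exact ⟨one_dvd n, hn0⟩
      · exact ⟨hpdvd, hn0⟩
      · exact ⟨hp2dvd, hn0⟩
      · exact ⟨dvd_rfl, hn0⟩
  have h2a := two_mul_aFun k l n
  have hnp : n / p = p^2 := by
    rw [hndef, show p^3 = p*p^2 by ring]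
    exact Nat.mul_div_cancel_left _ hp.pos
  have hgp : g k l n p = Wcore ((p:ℤ)^k) ((p:ℤ)^l) (((p^2:ℕ):ℤ)^k) (((p^2:ℕ):ℤ)^l) := by
    have := g_eq k l hpdvd
    rw [hnp] at this
    exact this
  have hgp2 : g k l n (p^2) = g k l n p := by
    unfold g
    have hnp2 : n / p^2 = p := by
      rw [hndef, show p^3 = p^2*p by ring]
      exact Nat.mul_div_cancel_left _ (by positivity)
    rw [hnp2, hnp]
    ring
  rw [hdivs, Finset.sum_insert (by
      simp only [Finset.mem_insert, Finset.mem_singleton]; push_neg; omega),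
    Finset.sum_insert (by
      simp only [Finset.mem_insert, Finset.mem_singleton]; push_neg; omega),
    Finset.sum_insert (by simp only [Finset.mem_singleton]; omega),
    Finset.sum_singleton, g_self k l hn0, hgp2] at h2a
  have hzero : g k l n 1 + g k l n p = 0 := by
    rw [g_one, hgp]
    have e0 : ((p^2:ℕ):ℤ) = (p:ℤ)^2 := by push_cast; ring
    have en : ((n:ℕ):ℤ) = (p:ℤ)^3 := by rw [hndef]; push_cast; ring
    rw [e0, en]
    have e1 : ((p:ℤ)^2)^k = ((p:ℤ)^k)^2 := by
      rw [← pow_mul, ← pow_mul]; congr 1; omega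
    have e1' : ((p:ℤ)^2)^l = ((p:ℤ)^l)^2 := by
      rw [← pow_mul, ← pow_mul]; congr 1; omega
    have e2 : ((p:ℤ)^3)^k = (p:ℤ)^k*((p:ℤ)^k)^2 := by
      rw [← pow_mul, ← pow_mul, ← pow_add]; congr 1; omega
    have e2' : ((p:ℤ)^3)^l = (p:ℤ)^l*((p:ℤ)^l)^2 := by
      rw [← pow_mul, ← pow_mul, ← pow_add]; congr 1; omega
    rw [e1, e1', e2, e2']
    exact E_zero _ _
  linarith

end AFunCube

theorem aFun_eq_zero_iff_prime_cube (k l n : ℕ) (hk : Odd k) (hl : Odd l)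
    (hkpos : 0 < k) (hkl : k < l) (hn : 2 ≤ n) :
    aFun k l n = 0 ↔ ∃ p : ℕ, p.Prime ∧ n = p ^ 3 := by
  have hk1 : 1 ≤ k := hkpos
  have hkl2 : k + 2 ≤ l := by
    obtain ⟨a, ha⟩ := hk
    obtain ⟨b, hb⟩ := hl
    omega
  constructor
  · intro h0
    by_contra hnc
    push_neg at hnc
    have hqp : n.minFac.Prime := Nat.minFac_prime (by omega)
    rcases lt_trichotomy n (n.minFac^3) with h | h | h
    · have := AFunCube.aFun_neg k l n hk1 hkl2 hn h
      linarith [this, h0.ge, h0.le]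
    · exact hnc n.minFac hqp h
    · have := AFunCube.aFun_pos k l n hk1 hkl2 hn h
      linarith [this, h0.ge, h0.le]
  · rintro ⟨p, hp, rfl⟩
    exact AFunCube.aFun_cube k l p hk1 hkl2 hp
end

section
/- Let k and ℓ be odd positive integers with ℓ > k. For every integer n ≥ 2 and every positive divisor d of n, one has a_{k,ℓ}(n,d) < 0 if and only if d = n. -/
/-- `a_{k,ℓ}(n,d) = (n^{3ℓ}+n^{2ℓ}+n^ℓ+1)·d^{3k} − (n^{3k}+n^{2k}+n^k+1)·d^{3ℓ}`. -/
def aD (k l n d : ℕ) : ℤ :=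
  ((n : ℤ) ^ (3 * l) + (n : ℤ) ^ (2 * l) + (n : ℤ) ^ l + 1) * (d : ℤ) ^ (3 * k)
    - ((n : ℤ) ^ (3 * k) + (n : ℤ) ^ (2 * k) + (n : ℤ) ^ k + 1) * (d : ℤ) ^ (3 * l)

theorem aD_neg_iff_eq (k l n d : ℕ) (hk : Odd k) (hl : Odd l) (hkpos : 0 < k)
    (hkl : k < l) (hn : 2 ≤ n) (hd : 0 < d) (hdvd : d ∣ n) :
    aD k l n d < 0 ↔ d = n := by
  have hN : (2:ℤ) ≤ (n:ℤ) := by exact_mod_cast hn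
  have hN1 : (1:ℤ) < (n:ℤ) := by linarith
  have hN1' : (1:ℤ) ≤ (n:ℤ) := by linarith
  constructor
  · intro hneg
    by_contra hne
    have hdn : d < n := lt_of_le_of_ne (Nat.le_of_dvd (by omega) hdvd) hne
    obtain ⟨c, hc⟩ := hdvd
    have hc2 : 2 ≤ c := by
      rcases Nat.lt_or_ge c 2 with h | h
      · interval_cases c <;> omega
      · exact h
    have h2d : 2 * (d:ℤ) ≤ (n:ℤ) := by
      have : 2 * d ≤ n := by
        calc 2 * d = d * 2 := by ring
        _ ≤ d * c := Nat.mul_le_mul_left d hc2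
        _ = n := hc.symm
      exact_mod_cast this
    set e := l - k with he
    have hle : l = k + e := by omega
    have he1 : 1 ≤ e := by omega
    set D := (d:ℤ)
    set N := (n:ℤ)
    have hD0 : (0:ℤ) ≤ D := by positivity
    have hDe0 : (0:ℤ) ≤ D ^ (3*e) := by positivity
    have hDk0 : (0:ℤ) ≤ D ^ (3*k) := by positivity
    have h8 : 8 * D ^ (3*e) ≤ N ^ (3*e) := by
      calc 8 * D ^ (3*e) = 2^3 * D ^ (3*e) := by norm_num
      _ ≤ 2^(3*e) * D ^ (3*e) := by
          have : (2:ℤ)^3 ≤ 2^(3*e) := pow_le_pow_right₀ (by norm_num) (by omega)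
          exact mul_le_mul_of_nonneg_right this hDe0
      _ = (2*D)^(3*e) := by rw [mul_pow]
      _ ≤ N^(3*e) := pow_le_pow_left₀ (by positivity) h2d _
    have hAk : N ^ (3*k) + N ^ (2*k) + N ^ k + 1 ≤ 4 * N ^ (3*k) := by
      have h1 : N ^ (2*k) ≤ N ^ (3*k) := pow_le_pow_right₀ hN1' (by omega)
      have h2 : N ^ k ≤ N ^ (3*k) := pow_le_pow_right₀ hN1' (by omega)
      have h3 : (1:ℤ) ≤ N ^ (3*k) := one_le_pow₀ hN1'
      linarith
    have hNl0 : (0:ℤ) ≤ N ^ (3*l) := by positivity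
    have hN2l0 : (0:ℤ) ≤ N ^ (2*l) := by positivity
    have hNll0 : (0:ℤ) ≤ N ^ l := by positivity
    have hAl : N ^ (3*l) ≤ N ^ (3*l) + N ^ (2*l) + N ^ l + 1 := by linarith
    have hNk0 : (0:ℤ) ≤ N ^ (3*k) := by positivity
    have key : (N ^ (3*k) + N ^ (2*k) + N ^ k + 1) * D ^ (3*e)
        ≤ N ^ (3*l) + N ^ (2*l) + N ^ l + 1 := by
      have step1 : (N ^ (3*k) + N ^ (2*k) + N ^ k + 1) * D ^ (3*e)
          ≤ 4 * N ^ (3*k) * D ^ (3*e) := mul_le_mul_of_nonneg_right hAk hDe0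
      have step2 : 8 * (N ^ (3*k) * D ^ (3*e)) ≤ N ^ (3*k) * N ^ (3*e) := by
        calc 8 * (N ^ (3*k) * D ^ (3*e)) = N ^ (3*k) * (8 * D ^ (3*e)) := by ring
        _ ≤ N ^ (3*k) * N ^ (3*e) := mul_le_mul_of_nonneg_left h8 hNk0
      have hEq : N ^ (3*k) * N ^ (3*e) = N ^ (3*l) := by
        rw [← pow_add]; congr 1; omega
      linarith
    have hDl : D ^ (3*l) = D ^ (3*k) * D ^ (3*e) := by
      rw [← pow_add]; congr 1; omega
    have : (N ^ (3*k) + N ^ (2*k) + N ^ k + 1) * D ^ (3*l)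
        ≤ (N ^ (3*l) + N ^ (2*l) + N ^ l + 1) * D ^ (3*k) := by
      calc (N ^ (3*k) + N ^ (2*k) + N ^ k + 1) * D ^ (3*l)
          = (N ^ (3*k) + N ^ (2*k) + N ^ k + 1) * D ^ (3*e) * D ^ (3*k) := by
            rw [hDl]; ring
        _ ≤ (N ^ (3*l) + N ^ (2*l) + N ^ l + 1) * D ^ (3*k) :=
            mul_le_mul_of_nonneg_right key hDk0
    unfold aD at hneg
    linarith
  · intro h
    subst h
    unfold aD
    set N := (d:ℤ)
    have e1 : N ^ (3*l) * N ^ (3*k) = N ^ (3*k) * N ^ (3*l) := by ring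
    have p1 : N ^ (2*l) * N ^ (3*k) < N ^ (2*k) * N ^ (3*l) := by
      rw [← pow_add, ← pow_add]
      exact pow_lt_pow_right₀ hN1 (by omega)
    have p2 : N ^ l * N ^ (3*k) < N ^ k * N ^ (3*l) := by
      rw [← pow_add, ← pow_add]
      exact pow_lt_pow_right₀ hN1 (by omega)
    have p3 : N ^ (3*k) < N ^ (3*l) := pow_lt_pow_right₀ hN1 (by omega)
    nlinarith [p1, p2, p3, e1]
end

section
/- Let k and ℓ be odd positive integers with ℓ > k. For every integer n ≥ 2, one has |a_{k,ℓ}(n,n)| > n^{2k+3ℓ}·(1 − 1/n²), where the inequality is understood in the rational numbers. -/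
/-! For `d = n` the top terms `n^{3k+3ℓ}` cancel, and `-a_{k,ℓ}(n,n)` is
`n^{2k+3ℓ} + n^{k+3ℓ} + n^{3ℓ} - n^{2ℓ+3k} - n^{ℓ+3k} - n^{3k}`. Oddness forces `ℓ ≥ k + 2`, so the
largest negative term satisfies `n^{2ℓ+3k} ≤ n^{2k+3ℓ-2}`, and the two remaining negative terms are
strictly dominated by positive ones. -/

lemma Nat.add_two_le_of_odd_of_lt {k l : ℕ} (hk : Odd k) (hl : Odd l) (hkl : k < l) :
    k + 2 ≤ l := by
  obtain ⟨a, rfl⟩ := hk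
  obtain ⟨b, rfl⟩ := hl
  omega

lemma cast_aD_self {R : Type*} [CommRing R] (k l n : ℕ) :
    ((aD k l n n : ℤ) : R) = ((n : R) ^ (2 * l + 3 * k) + (n : R) ^ (l + 3 * k) + (n : R) ^ (3 * k))
      - ((n : R) ^ (2 * k + 3 * l) + (n : R) ^ (k + 3 * l) + (n : R) ^ (3 * l)) := by
  unfold aD
  push_cast
  ring

lemma pow_mul_one_sub_inv_sq_lt {K : Type*} [Field K] [LinearOrder K] [IsStrictOrderedRing K]
    {x : K} (hx : 1 < x) {k l : ℕ} (hkl : k + 2 ≤ l) :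
    x ^ (2 * k + 3 * l) * (1 - 1 / x ^ 2)
      < (x ^ (2 * k + 3 * l) + x ^ (k + 3 * l) + x ^ (3 * l))
        - (x ^ (2 * l + 3 * k) + x ^ (l + 3 * k) + x ^ (3 * k)) := by
  have hx2 : 0 < x ^ 2 := by positivity
  have hlead : x ^ (2 * l + 3 * k) * x ^ 2 ≤ x ^ (2 * k + 3 * l) := by
    rw [← pow_add]; exact pow_le_pow_right₀ hx.le (by omega)
  have hmid : x ^ (l + 3 * k) < x ^ (k + 3 * l) := pow_lt_pow_right₀ hx (by omega)
  have hlow : x ^ (3 * k) ≤ x ^ (3 * l) := pow_le_pow_right₀ hx.le (by omega)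
  have hsplit : x ^ (2 * k + 3 * l) * (1 - 1 / x ^ 2)
      = x ^ (2 * k + 3 * l) - x ^ (2 * k + 3 * l) / x ^ 2 := by
    field_simp
  rw [hsplit]
  have : x ^ (2 * l + 3 * k) ≤ x ^ (2 * k + 3 * l) / x ^ 2 := (le_div_iff₀ hx2).mpr hlead
  linarith

theorem aD_abs_lower_bound_general (k l n : ℕ) (hk : Odd k) (hl : Odd l)
    (hkl : k < l) (hn : 2 ≤ n) :
    (n : ℚ) ^ (2 * k + 3 * l) * (1 - 1 / (n : ℚ) ^ 2) < ((|aD k l n n| : ℤ) : ℚ) := by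
  have hn' : (1 : ℚ) < n := by exact_mod_cast hn
  calc (n : ℚ) ^ (2 * k + 3 * l) * (1 - 1 / (n : ℚ) ^ 2)
      < -((aD k l n n : ℤ) : ℚ) := by
        rw [cast_aD_self, neg_sub]
        exact pow_mul_one_sub_inv_sq_lt hn' (Nat.add_two_le_of_odd_of_lt hk hl hkl)
    _ ≤ |((aD k l n n : ℤ) : ℚ)| := neg_le_abs _
    _ = ((|aD k l n n| : ℤ) : ℚ) := (Int.cast_abs).symm

theorem aD_abs_lower_bound (k l n : ℕ) (hk : Odd k) (hl : Odd l) (hkpos : 0 < k)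
    (hkl : k < l) (hn : 2 ≤ n) :
    (n : ℚ) ^ (2 * k + 3 * l) * (1 - 1 / (n : ℚ) ^ 2) < ((|aD k l n n| : ℤ) : ℚ) :=
  aD_abs_lower_bound_general k l n hk hl hkl hn
end

section
/- Let k and ℓ be odd positive integers with ℓ > k, and let n ≥ 2 be an integer. If there exists a prime p dividing n with n > p³, then a_{k,ℓ}(n) > 0. -/
private lemma sum_inv_sq_le (a b : ℕ) (ha : 1 ≤ a) :
    ∑ q ∈ Finset.Icc (a+1) b, (1:ℝ)/(q:ℝ)^2 ≤ 1/(a:ℝ) := by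
  have ha0 : (0:ℝ) < a := by exact_mod_cast ha
  rcases le_or_gt b a with h | h
  · rw [Finset.Icc_eq_empty (by omega)]
    simp only [Finset.sum_empty]
    positivity
  · have key : ∀ c, a ≤ c → ∑ q ∈ Finset.Icc (a+1) c, (1:ℝ)/(q:ℝ)^2 ≤ 1/(a:ℝ) - 1/(c:ℝ) := by
      intro c hc
      induction c, hc using Nat.le_induction with
      | base => rw [Finset.Icc_eq_empty (by omega)]; simp
      | succ c hc ih =>
        rw [Finset.sum_Icc_succ_top (by omega)]
        have hc0 : (0:ℝ) < c := by
          have : (1:ℕ) ≤ c := by omega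
          exact_mod_cast this
        have h1 : (1:ℝ)/((c:ℝ)+1)^2 ≤ 1/(c:ℝ) - 1/((c:ℝ)+1) := by
          rw [div_sub_div _ _ (by positivity) (by positivity)]
          rw [div_le_div_iff₀ (by positivity) (by positivity)]
          ring_nf
          nlinarith
        push_cast
        linarith
    have h2 := key b (le_of_lt h)
    have hb0 : (0:ℝ) < b := by
      have : (1:ℕ) ≤ b := by omega
      exact_mod_cast this
    have : (0:ℝ) ≤ 1/(b:ℝ) := by positivity
    linarith

private lemma elt_bound (d q n p e : ℕ) (hmul : d * q = n) (hq : p + 1 ≤ q) :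
    (d:ℝ)^(e+2) ≤ (n:ℝ)^(e+2) / ((p:ℝ)+1)^e * (1/(q:ℝ)^2) := by
  have hq0 : (0:ℝ) < (q:ℝ) := by exact_mod_cast (by omega : 0 < q)
  have hp1 : (0:ℝ) < (p:ℝ)+1 := by positivity
  have hqp : ((p:ℝ)+1) ≤ (q:ℝ) := by exact_mod_cast hq
  have heq : (n:ℝ) = (d:ℝ)*(q:ℝ) := by exact_mod_cast hmul.symm
  have key : (d:ℝ)^(e+2) * (((p:ℝ)+1)^e * (q:ℝ)^2) ≤ (n:ℝ)^(e+2) := by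
    rw [heq, mul_pow]
    have h1 : ((p:ℝ)+1)^e ≤ (q:ℝ)^e := pow_le_pow_left₀ (by positivity) hqp e
    calc (d:ℝ)^(e+2)*(((p:ℝ)+1)^e*(q:ℝ)^2) ≤ (d:ℝ)^(e+2)*((q:ℝ)^e*(q:ℝ)^2) := by
          apply mul_le_mul_of_nonneg_left _ (by positivity)
          exact mul_le_mul_of_nonneg_right h1 (by positivity)
      _ = (d:ℝ)^(e+2)*(q:ℝ)^(e+2) := by rw [← pow_add]
  have hrw : (n:ℝ)^(e+2)/((p:ℝ)+1)^e*(1/(q:ℝ)^2)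
      = (n:ℝ)^(e+2)/(((p:ℝ)+1)^e*(q:ℝ)^2) := by ring
  rw [hrw, le_div_iff₀ (by positivity)]
  exact key

set_option maxHeartbeats 1000000 in
private lemma core_ineq (P M : ℝ) (a b : ℕ) (hP : 2 ≤ P) (hM : P^2 + 1 ≤ M) :
    (P*M)^(3*a+3*b+9) * ((P*M)^(2*a+2) + (P*M)^(a+1) + 1)
      + 2*(P*M)^(3*a+3) * M^(3*a+3*b+9)
      + 2*(P*M)^(3*a+3) * ((P*M)^(3*a+3*b+9) / ((P+1)^(3*a+3*b+7) * P))
      < (P*M)^(3*a+3*b+9) * M^(3*a+3) := by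
  obtain ⟨N, hN_def⟩ : ∃ N:ℝ, N = P*M := ⟨_, rfl⟩
  rw [← hN_def]
  have hP0 : (0:ℝ) < P := by linarith
  have hM5 : (5:ℝ) ≤ M := by nlinarith
  have hM0 : (0:ℝ) < M := by linarith
  have hN10 : (10:ℝ) ≤ N := by rw [hN_def]; nlinarith
  have hN0 : (0:ℝ) < N := by linarith
  have hN1 : (1:ℝ) ≤ N := by linarith
  have hP1 : (0:ℝ) < P + 1 := by linarith
  obtain ⟨w, hw_def⟩ : ∃ w:ℝ, w = 2/P^6 + 2/(P+1)^5 := ⟨_, rfl⟩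
  have hw0 : 0 ≤ w := by rw [hw_def]; positivity
  have hw15 : w * (1 + P^2) ≤ 15/32 := by
    have h1 : 2/P^6 ≤ 1/P^5 := by
      rw [div_le_div_iff₀ (by positivity) (by positivity)]
      nlinarith [pow_pos hP0 5]
    have h2 : 2/(P+1)^5 ≤ 2/P^5 := by
      apply div_le_div_of_nonneg_left (by norm_num) (by positivity)
      apply pow_le_pow_left₀ (le_of_lt hP0) (by linarith)
    have h3 : w ≤ 3/P^5 := by
      rw [hw_def]
      have : (1:ℝ)/P^5 + 2/P^5 = 3/P^5 := by ring
      linarith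
    have h4 : (3/P^5) * (1+P^2) ≤ 15/32 := by
      rw [div_mul_eq_mul_div, div_le_div_iff₀ (by positivity) (by norm_num)]
      nlinarith [pow_pos hP0 3, sq_nonneg P, pow_le_pow_left₀ (by norm_num : (0:ℝ) ≤ 2) hP 5,
        pow_le_pow_left₀ (by norm_num : (0:ℝ) ≤ 2) hP 3]
    calc w * (1+P^2) ≤ (3/P^5) * (1+P^2) :=
          mul_le_mul_of_nonneg_right h3 (by positivity)
      _ ≤ 15/32 := h4
  have hw1 : w ≤ 15/32 := by nlinarith [sq_nonneg P, hw0]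
  have hC : N^(2*a+2) + N^(2*a)*M^2 ≤ M^(3*a+3) := by
    have hM3 : N^2 + M^2 ≤ M^3 := by
      have : N^2 = P^2*M^2 := by rw [hN_def]; ring
      nlinarith
    calc N^(2*a+2) + N^(2*a)*M^2 = (N^2)^a * (N^2+M^2) := by
          rw [show (N^2)^a = N^(2*a) by rw [← pow_mul], pow_add]; ring
      _ ≤ (N^2+M^2)^a * (N^2+M^2) := by
          apply mul_le_mul_of_nonneg_right _ (by positivity)
          apply pow_le_pow_left₀ (by positivity) (by nlinarith) a
      _ = (N^2+M^2)^(a+1) := (pow_succ _ a).symm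
      _ ≤ (M^3)^(a+1) := pow_le_pow_left₀ (by positivity) hM3 _
      _ = M^(3*a+3) := by rw [show 3*a+3 = 3*(a+1) by omega, pow_mul]
  have hE : 2*N+5 ≤ M^2 := by nlinarith
  have g1 : N^(3*a+3*b+9)*M^(3*a+3) = (N^(3*a+3)*M^(3*a+3*b+9))*P^(3*b+6) := by
    rw [show 3*a+3*b+9 = (3*a+3) + (3*b+6) by omega, pow_add, pow_add,
      show N^(3*b+6) = P^(3*b+6)*M^(3*b+6) by rw [hN_def, mul_pow]]
    ring
  have partA : 2*N^(3*a+3)*M^(3*a+3*b+9) ≤ 2/P^6 * (N^(3*a+3*b+9)*M^(3*a+3)) := by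
    rw [div_mul_eq_mul_div, le_div_iff₀ (by positivity)]
    calc 2*N^(3*a+3)*M^(3*a+3*b+9)*P^6
        ≤ 2*N^(3*a+3)*M^(3*a+3*b+9)*P^(3*b+6) :=
          mul_le_mul_of_nonneg_left
            (pow_le_pow_right₀ (by linarith : (1:ℝ) ≤ P) (by omega)) (by positivity)
      _ = 2*(N^(3*a+3*b+9)*M^(3*a+3)) := by rw [g1]; ring
  have partB : 2*N^(3*a+3)*(N^(3*a+3*b+9)/((P+1)^(3*a+3*b+7)*P))
      ≤ 2/(P+1)^5 * (N^(3*a+3*b+9)*M^(3*a+3)) := by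
    have lhs_eq : 2*N^(3*a+3)*(N^(3*a+3*b+9)/((P+1)^(3*a+3*b+7)*P))
        = (2*N^(3*a+3)*N^(3*a+3*b+9))/((P+1)^(3*a+3*b+7)*P) := by ring
    rw [lhs_eq, div_mul_eq_mul_div, div_le_div_iff₀ (by positivity) (by positivity)]
    have hNK : N^(3*a+3) = P^(3*a+3)*M^(3*a+3) := by rw [hN_def, mul_pow]
    have hPK : P^(3*a+3) = P^(3*a+2)*P := by rw [show 3*a+3 = (3*a+2)+1 by omega, pow_succ]
    have hW : (P+1)^(3*a+3*b+7) = (P+1)^(3*a+2)*(P+1)^(3*b+5) := by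
      rw [← pow_add]; congr 1; omega
    have h6' : P^(3*a+2) ≤ (P+1)^(3*a+2) := pow_le_pow_left₀ (le_of_lt hP0) (by linarith) _
    have h5' : (P+1)^5 ≤ (P+1)^(3*b+5) := pow_le_pow_right₀ (by linarith) (by omega)
    have key : P^(3*a+2)*(P+1)^5 ≤ (P+1)^(3*a+2)*(P+1)^(3*b+5) :=
      mul_le_mul h6' h5' (by positivity) (by positivity)
    have key2 : (2*M^(3*a+3)*N^(3*a+3*b+9)*P) * (P^(3*a+2)*(P+1)^5)
        ≤ (2*M^(3*a+3)*N^(3*a+3*b+9)*P) * ((P+1)^(3*a+2)*(P+1)^(3*b+5)) :=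
      mul_le_mul_of_nonneg_left key (by positivity)
    calc 2*N^(3*a+3)*N^(3*a+3*b+9)*(P+1)^5
        = (2*M^(3*a+3)*N^(3*a+3*b+9)*P) * (P^(3*a+2)*(P+1)^5) := by
          rw [hNK, hPK]; ring
      _ ≤ (2*M^(3*a+3)*N^(3*a+3*b+9)*P) * ((P+1)^(3*a+2)*(P+1)^(3*b+5)) := key2
      _ = 2*(N^(3*a+3*b+9)*M^(3*a+3)) * ((P+1)^(3*a+3*b+7)*P) := by rw [hW]; ring
  have heq : N^(2*a+2) = N^(2*a)*(P^2*M^2) := by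
    rw [pow_add, show N^2 = P^2*M^2 by rw [hN_def]; ring]
  have hXa : N^(a+1) ≤ N^(2*a)*N := by
    rw [← pow_succ]
    exact pow_le_pow_right₀ hN1 (by omega)
  have hX1 : (1:ℝ) ≤ N^(2*a) := by
    calc (1:ℝ) = 1^(2*a) := (one_pow _).symm
      _ ≤ N^(2*a) := pow_le_pow_left₀ zero_le_one hN1 _
  have F : N^(2*a+2) + N^(a+1) + 1 + w*M^(3*a+3) < M^(3*a+3) := by
    rw [heq] at hC ⊢
    have h17 : (17:ℝ)/32 ≤ 1 - w := by linarith
    have s1 : (1-w)*(N^(2*a)*(P^2*M^2) + N^(2*a)*M^2) ≤ (1-w)*M^(3*a+3) :=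
      mul_le_mul_of_nonneg_left hC (by linarith)
    have s3 : w*(1+P^2)*(N^(2*a)*M^2) ≤ (15/32)*(N^(2*a)*M^2) :=
      mul_le_mul_of_nonneg_right hw15 (by positivity)
    have s4 : N^(2*a)*(2*N+5) ≤ N^(2*a)*M^2 :=
      mul_le_mul_of_nonneg_left hE (by positivity)
    have s5 : N ≤ N^(2*a)*N := le_mul_of_one_le_left (by linarith) hX1
    nlinarith [s1, s3, s4, s5]
  have hsum : 2*N^(3*a+3)*M^(3*a+3*b+9)
      + 2*N^(3*a+3)*(N^(3*a+3*b+9)/((P+1)^(3*a+3*b+7)*P))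
      ≤ w * (N^(3*a+3*b+9)*M^(3*a+3)) := by
    have : 2/P^6 * (N^(3*a+3*b+9)*M^(3*a+3)) + 2/(P+1)^5 * (N^(3*a+3*b+9)*M^(3*a+3))
        = w * (N^(3*a+3*b+9)*M^(3*a+3)) := by rw [hw_def]; ring
    linarith [partA, partB]
  have hfin : N^(3*a+3*b+9) * (N^(2*a+2) + N^(a+1) + 1 + w*M^(3*a+3))
      < N^(3*a+3*b+9) * M^(3*a+3) :=
    mul_lt_mul_of_pos_left F (by positivity)
  nlinarith [hsum, hfin]

set_option maxHeartbeats 1000000 in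
theorem aFun_pos (k l n : ℕ) (hk : Odd k) (hl : Odd l) (hkpos : 0 < k)
    (hkl : k < l) (hn : 2 ≤ n)
    (hp : ∃ p : ℕ, p.Prime ∧ p ∣ n ∧ p ^ 3 < n) :
    0 < aFun k l n := by
  -- arithmetic on k, l
  have hl2 : k + 2 ≤ l := by
    obtain ⟨i, hi⟩ := hk; obtain ⟨j, hj⟩ := hl; omega
  obtain ⟨a, rfl⟩ : ∃ a, k = a + 1 := ⟨k - 1, by omega⟩
  obtain ⟨b, rfl⟩ : ∃ b, l = a + b + 3 := ⟨l - a - 3, by omega⟩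
  -- set up p and m
  obtain ⟨p', hp'p, hp'dvd, hp'3⟩ := hp
  have hn0 : n ≠ 0 := by omega
  have hn1 : n ≠ 1 := by omega
  have hpp : Nat.Prime n.minFac := Nat.minFac_prime hn1
  set p := n.minFac with hp_def
  have hp2 : 2 ≤ p := hpp.two_le
  have hple : p ≤ p' := Nat.minFac_le_of_dvd hp'p.two_le hp'dvd
  have hp3 : p ^ 3 < n := lt_of_le_of_lt (Nat.pow_le_pow_left hple 3) hp'3
  obtain ⟨m, hnm⟩ : p ∣ n := Nat.minFac_dvd n
  have hm2 : p^2 + 1 ≤ m := by nlinarith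
  have hm5 : 5 ≤ m := by nlinarith
  have hmn : m < n := by nlinarith
  have hmdvd : m ∣ n := ⟨p, by rw [hnm, Nat.mul_comm]⟩
  -- divisor decomposition
  have hnmem : n ∈ n.divisors := Nat.mem_divisors_self n hn0
  have hmmem : m ∈ n.divisors.erase n :=
    Finset.mem_erase.2 ⟨by omega, Nat.mem_divisors.2 ⟨hmdvd, hn0⟩⟩
  set S := (n.divisors.erase n).erase m with hS_def
  have hsum : ∀ s : ℕ, sigmaZ s n = (∑ d ∈ S, (d:ℤ)^s) + (m:ℤ)^s + (n:ℤ)^s := by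
    intro s
    rw [sigmaZ, ← Finset.sum_erase_add _ _ hnmem, ← Finset.sum_erase_add _ _ hmmem]
  have hSfact : ∀ d ∈ S, 0 < d ∧ d * (n/d) = n ∧ p + 1 ≤ n/d := by
    intro d hd
    rw [hS_def] at hd
    have h1 := Finset.mem_erase.1 hd
    have h2 := Finset.mem_erase.1 h1.2
    have hdm : d ≠ m := h1.1
    have hdn : d ≠ n := h2.1
    have hddvd : d ∣ n := (Nat.mem_divisors.1 h2.2).1
    have hd0 : 0 < d := Nat.pos_of_dvd_of_pos hddvd (by omega)
    obtain ⟨t, ht⟩ := hddvd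
    have ht0 : t ≠ 0 := by intro h; rw [h, Nat.mul_zero] at ht; omega
    have ht1 : t ≠ 1 := by intro h; rw [h, Nat.mul_one] at ht; omega
    have hq : n / d = t := by rw [ht]; exact Nat.mul_div_cancel_left t hd0
    have htdvd : t ∣ n := ⟨d, by rw [ht, Nat.mul_comm]⟩
    have hqp : p ≤ t := Nat.minFac_le_of_dvd (by omega) htdvd
    have hqne : t ≠ p := by
      intro h
      apply hdm
      rw [h] at ht
      have : p * d = p * m := by rw [← hnm, ht, Nat.mul_comm]
      exact Nat.eq_of_mul_eq_mul_left (by omega) this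
    exact ⟨hd0, by rw [hq]; exact ht.symm, by omega⟩
  -- real quantities
  have hNPM : (n:ℝ) = (p:ℝ) * (m:ℝ) := by exact_mod_cast hnm
  have hPR : (2:ℝ) ≤ (p:ℝ) := by exact_mod_cast hp2
  have hMR : ((p:ℝ))^2 + 1 ≤ (m:ℝ) := by exact_mod_cast hm2
  have hN0 : (0:ℝ) < (n:ℝ) := by
    have : 0 < n := by omega
    exact_mod_cast this
  have hp0R : (0:ℝ) < (p:ℝ) := by linarith
  have hp1R : (0:ℝ) < (p:ℝ) + 1 := by linarith
  -- bound on the remainder sum R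
  have hRB : (∑ d ∈ S, (d:ℝ)^(3*a+3*b+9))
      ≤ (n:ℝ)^(3*a+3*b+9) / (((p:ℝ)+1)^(3*a+3*b+7) * (p:ℝ)) := by
    have step1 : (∑ d ∈ S, (d:ℝ)^(3*a+3*b+9))
        ≤ ∑ d ∈ S, ((n:ℝ)^(3*a+3*b+9) / ((p:ℝ)+1)^(3*a+3*b+7) * (1/((n/d : ℕ):ℝ)^2)) := by
      apply Finset.sum_le_sum
      intro d hd
      obtain ⟨hd0, hmul, hq⟩ := hSfact d hd
      have := elt_bound d (n/d) n p (3*a+3*b+7) hmul hq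
      rw [show (3*a+3*b+7)+2 = 3*a+3*b+9 by omega] at this
      exact this
    have step2 : ∑ d ∈ S, ((n:ℝ)^(3*a+3*b+9) / ((p:ℝ)+1)^(3*a+3*b+7) * (1/((n/d : ℕ):ℝ)^2))
        = (n:ℝ)^(3*a+3*b+9) / ((p:ℝ)+1)^(3*a+3*b+7) * ∑ d ∈ S, (1/((n/d : ℕ):ℝ)^2) :=
      (Finset.mul_sum _ _ _).symm
    have step3 : ∑ d ∈ S, (1/((n/d : ℕ):ℝ)^2) ≤ 1/(p:ℝ) := by
      have hinj : ∀ x ∈ S, ∀ y ∈ S, n / x = n / y → x = y := by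
        intro x hx y hy hxy
        obtain ⟨hx0, hxmul, hxq⟩ := hSfact x hx
        obtain ⟨hy0, hymul, hyq⟩ := hSfact y hy
        have hq0 : 0 < n / x := by omega
        rw [hxy] at hxmul
        have := hxmul.trans hymul.symm
        exact Nat.eq_of_mul_eq_mul_right (by omega) this
      have himg_eq : ∑ q ∈ S.image (fun d => n / d), (1:ℝ)/(q:ℝ)^2
          = ∑ d ∈ S, (1:ℝ)/((n/d : ℕ):ℝ)^2 := Finset.sum_image hinj
      rw [← himg_eq]
      have hsub : S.image (n / ·) ⊆ Finset.Icc (p+1) n := by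
        intro q hq
        obtain ⟨d, hd, rfl⟩ := Finset.mem_image.1 hq
        obtain ⟨hd0, hmul, hqp⟩ := hSfact d hd
        exact Finset.mem_Icc.2 ⟨hqp, Nat.div_le_self n d⟩
      calc ∑ q ∈ S.image (n / ·), 1/(q:ℝ)^2
          ≤ ∑ q ∈ Finset.Icc (p+1) n, 1/(q:ℝ)^2 :=
            Finset.sum_le_sum_of_subset_of_nonneg hsub (by intros; positivity)
        _ ≤ 1/(p:ℝ) := sum_inv_sq_le p n (by omega)
    calc (∑ d ∈ S, (d:ℝ)^(3*a+3*b+9))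
        ≤ (n:ℝ)^(3*a+3*b+9) / ((p:ℝ)+1)^(3*a+3*b+7) * ∑ d ∈ S, (1/((n/d : ℕ):ℝ)^2) := by
          rw [← step2]; exact step1
      _ ≤ (n:ℝ)^(3*a+3*b+9) / ((p:ℝ)+1)^(3*a+3*b+7) * (1/(p:ℝ)) :=
          mul_le_mul_of_nonneg_left step3 (by positivity)
      _ = (n:ℝ)^(3*a+3*b+9) / (((p:ℝ)+1)^(3*a+3*b+7) * (p:ℝ)) := by
          rw [div_mul_div_comm, mul_one]
  -- cast sigma identities to ℝ
  have hsumR : ∀ s : ℕ, ((sigmaZ s n : ℤ):ℝ)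
      = (∑ d ∈ S, (d:ℝ)^s) + (m:ℝ)^s + (n:ℝ)^s := by
    intro s
    rw [hsum s]
    push_cast
    ring
  -- enough to prove it in ℝ
  suffices h : (0:ℝ) < ((aFun (a+1) (a+b+3) n : ℤ):ℝ) by exact_mod_cast h
  rw [aFun]
  push_cast
  rw [show 3*(a+b+3) = 3*a+3*b+9 by ring, show 2*(a+b+3) = 2*a+2*b+6 by ring,
    show 3*(a+1) = 3*a+3 by ring, show 2*(a+1) = 2*a+2 by ring]
  -- lower bound for sigma (3k), exact form for sigma (3l)
  have hσk : (n:ℝ)^(3*a+3) + (m:ℝ)^(3*a+3) ≤ ((sigmaZ (3*a+3) n : ℤ):ℝ) := by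
    rw [hsumR]
    have : (0:ℝ) ≤ ∑ d ∈ S, (d:ℝ)^(3*a+3) := Finset.sum_nonneg (by intros; positivity)
    linarith
  have hσl : ((sigmaZ (3*a+3*b+9) n : ℤ):ℝ)
      = (∑ d ∈ S, (d:ℝ)^(3*a+3*b+9)) + (m:ℝ)^(3*a+3*b+9) + (n:ℝ)^(3*a+3*b+9) := hsumR _
  -- core inequality
  have hcore := core_ineq (p:ℝ) (m:ℝ) a b hPR hMR
  rw [show ((p:ℝ)*(m:ℝ)) = (n:ℝ) from hNPM.symm] at hcore
  -- assembly
  have hRR0 : (0:ℝ) ≤ ∑ d ∈ S, (d:ℝ)^(3*a+3*b+9) := Finset.sum_nonneg (by intros; positivity)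
  have hN1 : (1:ℝ) ≤ (n:ℝ) := by
    have : 1 ≤ n := by omega
    exact_mod_cast this
  have hTk2 : (n:ℝ)^(2*a+2) + (n:ℝ)^(a+1) + 1 ≤ (n:ℝ)^(3*a+3) := by
    have hN10 : (10:ℝ) ≤ (n:ℝ) := by
      have : 10 ≤ n := by nlinarith
      exact_mod_cast this
    have q1 : (n:ℝ)^(3*a+3) = (n:ℝ)^(2*a+2)*(n:ℝ)^(a+1) := by
      rw [← pow_add]; congr 1; omega
    have q2 : (10:ℝ) ≤ (n:ℝ)^(a+1) := by
      calc (10:ℝ) ≤ (n:ℝ) := hN10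
        _ = (n:ℝ)^1 := (pow_one _).symm
        _ ≤ (n:ℝ)^(a+1) := pow_le_pow_right₀ hN1 (by omega)
    have q3 : (n:ℝ)^(a+1) ≤ (n:ℝ)^(2*a+2) := pow_le_pow_right₀ hN1 (by omega)
    have q4 : (1:ℝ) ≤ (n:ℝ)^(2*a+2) := by
      calc (1:ℝ) = 1^(2*a+2) := (one_pow _).symm
        _ ≤ (n:ℝ)^(2*a+2) := pow_le_pow_left₀ zero_le_one hN1 _
    have q5 : (n:ℝ)^(2*a+2)*10 ≤ (n:ℝ)^(2*a+2)*(n:ℝ)^(a+1) :=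
      mul_le_mul_of_nonneg_left q2 (by positivity)
    linarith
  -- Tl * σk ≥ N^L * (N^K + M^K)
  have h1 : (n:ℝ)^(3*a+3*b+9) * ((n:ℝ)^(3*a+3) + (m:ℝ)^(3*a+3))
      ≤ ((n:ℝ)^(3*a+3*b+9) + (n:ℝ)^(2*a+2*b+6) + (n:ℝ)^(a+b+3) + 1)
        * ((sigmaZ (3*a+3) n : ℤ):ℝ) := by
    apply mul_le_mul _ hσk (by positivity) (by positivity)
    nlinarith [pow_nonneg hN0.le (2*a+2*b+6), pow_nonneg hN0.le (a+b+3)]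
  -- Tk * σl upper bound
  have hM0 : (0:ℝ) < (m:ℝ) := by
    have : 0 < m := by omega
    exact_mod_cast this
  have h2 : ((n:ℝ)^(3*a+3) + (n:ℝ)^(2*a+2) + (n:ℝ)^(a+1) + 1)
        * ((sigmaZ (3*a+3*b+9) n : ℤ):ℝ)
      ≤ ((n:ℝ)^(3*a+3) + (n:ℝ)^(2*a+2) + (n:ℝ)^(a+1) + 1) * (n:ℝ)^(3*a+3*b+9)
        + 2*(n:ℝ)^(3*a+3) * (m:ℝ)^(3*a+3*b+9)
        + 2*(n:ℝ)^(3*a+3) * ((n:ℝ)^(3*a+3*b+9) / (((p:ℝ)+1)^(3*a+3*b+7) * (p:ℝ))) := by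
    rw [hσl]
    have hTkb : (n:ℝ)^(3*a+3) + (n:ℝ)^(2*a+2) + (n:ℝ)^(a+1) + 1 ≤ 2*(n:ℝ)^(3*a+3) := by
      linarith
    have t1 : ((n:ℝ)^(3*a+3) + (n:ℝ)^(2*a+2) + (n:ℝ)^(a+1) + 1)
        * (∑ d ∈ S, (d:ℝ)^(3*a+3*b+9))
        ≤ 2*(n:ℝ)^(3*a+3) * ((n:ℝ)^(3*a+3*b+9) / (((p:ℝ)+1)^(3*a+3*b+7) * (p:ℝ))) :=
      mul_le_mul hTkb hRB hRR0 (by positivity)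
    have t2 : ((n:ℝ)^(3*a+3) + (n:ℝ)^(2*a+2) + (n:ℝ)^(a+1) + 1) * (m:ℝ)^(3*a+3*b+9)
        ≤ 2*(n:ℝ)^(3*a+3) * (m:ℝ)^(3*a+3*b+9) :=
      mul_le_mul_of_nonneg_right hTkb (by positivity)
    nlinarith [t1, t2]
  linarith [h1, h2, hcore]
end

section
/- Let k and ℓ be odd positive integers with ℓ > k. If n = p³ for some prime p, then a_{k,ℓ}(n) = 0. -/
lemma sigmaZ_prime_cube (s : ℕ) (p : ℕ) (hp : p.Prime) :
    sigmaZ (3 * s) (p ^ 3)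
      = ((p ^ 3 : ℕ) : ℤ) ^ (3 * s) + ((p ^ 3 : ℕ) : ℤ) ^ (2 * s)
        + ((p ^ 3 : ℕ) : ℤ) ^ s + 1 := by
  unfold sigmaZ
  rw [Nat.sum_divisors_prime_pow hp]
  simp [Finset.sum_range_succ]
  push_cast
  ring

theorem aFun_prime_cube_eq_zero (k l : ℕ) (hk : Odd k) (hl : Odd l) (hkpos : 0 < k)
    (hkl : k < l) (p : ℕ) (hp : p.Prime) :
    aFun k l (p ^ 3) = 0 := by
  unfold aFun
  rw [sigmaZ_prime_cube k p hp, sigmaZ_prime_cube l p hp]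
  ring
end

section
/- Let k and ℓ be odd positive integers with ℓ > k, and let n ≥ 2 be an integer. If n < p³ for every prime p dividing n, then a_{k,ℓ}(n) < 0. -/
/-! The hypothesis forces `n = p`, `n = p²` or `n = pq` with `p < q < p²`, and in each case
`σ₃(n) ≤ n³ + n²`; for `n = pq` this is `p³ + q³ + 1 ≤ p²q²`, with equality at `(2, 3)`.
Writing `σ_{3k}(n) = n^{3k} + 1 + ∑ d^{3k}` over the divisors `1 < d < n`, superadditivity
of `t ↦ t^k` bounds that last sum by `(n² - 1)^k`, and the slack
`n^{2k} - (n² - 1)^k ≥ n^{2k-2}` is what beats the extra terms once `ℓ ≥ k + 2`, which is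
where the parity of `k` and `ℓ` enters. -/

open ArithmeticFunction
open scoped ArithmeticFunction.sigma

section PowerInequalities

variable {R : Type*}

theorem Finset.sum_pow_le_pow_sum [Semiring R] [PartialOrder R] [IsOrderedRing R] {ι : Type*}
    (s : Finset ι) {f : ι → R} (hf : ∀ i ∈ s, 0 ≤ f i) {k : ℕ} (hk : k ≠ 0) :
    ∑ i ∈ s, f i ^ k ≤ (∑ i ∈ s, f i) ^ k := by
  classical
  induction s using Finset.induction_on with
  | empty => simp [zero_pow hk]
  | insert a s ha ih =>
    rw [Finset.sum_insert ha, Finset.sum_insert ha]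
    have hs : ∀ i ∈ s, 0 ≤ f i := fun i hi ↦ hf i (Finset.mem_insert_of_mem hi)
    calc f a ^ k + ∑ i ∈ s, f i ^ k ≤ f a ^ k + (∑ i ∈ s, f i) ^ k := by
          gcongr; exact ih hs
      _ ≤ (f a + ∑ i ∈ s, f i) ^ k :=
        pow_add_pow_le (hf a (Finset.mem_insert_self a s)) (Finset.sum_nonneg hs) hk

theorem pow_succ_add_pow_le_add_one_pow_succ [CommSemiring R] [PartialOrder R] [IsOrderedRing R]
    {w : R} (hw : 0 ≤ w) (k : ℕ) : w ^ (k + 1) + (w + 1) ^ k ≤ (w + 1) ^ (k + 1) := by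
  have : w ^ k ≤ (w + 1) ^ k := pow_le_pow_left₀ hw (le_add_of_nonneg_right zero_le_one) k
  calc w ^ (k + 1) + (w + 1) ^ k = w ^ k * w + (w + 1) ^ k := by ring
    _ ≤ (w + 1) ^ k * w + (w + 1) ^ k := by gcongr
    _ = (w + 1) ^ (k + 1) := by ring

end PowerInequalities

theorem pow_three_add_pow_three_add_one_le {p q : ℕ} (hp : 2 ≤ p) (hpq : p < q)
    (hq : q < p ^ 2) :
    p ^ 3 + q ^ 3 + 1 ≤ p ^ 2 * q ^ 2 := by
  obtain ⟨a, ha⟩ : ∃ a, p ^ 2 = q + a := ⟨p ^ 2 - q, by omega⟩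
  rw [ha]
  rcases le_or_gt p a with h | h
  · nlinarith [Nat.mul_le_mul (show p + 1 ≤ q by omega) (show p + 1 ≤ q by omega)]
  · nlinarith

theorem Nat.prime_or_eq_sq_or_eq_mul_of_lt_pow_three {n : ℕ} (hn : 2 ≤ n)
    (h : ∀ p, p.Prime → p ∣ n → n < p ^ 3) :
    n.Prime ∨ (∃ p, p.Prime ∧ n = p ^ 2) ∨
      ∃ p q, p.Prime ∧ q.Prime ∧ p < q ∧ q < p ^ 2 ∧ n = p * q := by
  set p := n.minFac
  have hp : p.Prime := Nat.minFac_prime (by omega)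
  have hpn : n < p ^ 3 := h p hp n.minFac_dvd
  obtain ⟨m, hm⟩ : p ∣ n := n.minFac_dvd
  rcases Nat.lt_or_ge m 2 with hm2 | hm2
  · interval_cases m
    · omega
    · left; rwa [hm, mul_one]
  set q := m.minFac
  have hq : q.Prime := Nat.minFac_prime (by omega)
  obtain ⟨r, hr⟩ : q ∣ m := m.minFac_dvd
  have hpq : p ≤ q := Nat.minFac_le_of_dvd hq.two_le ⟨p * r, by rw [hm, hr]; ring⟩
  obtain rfl : r = 1 := by
    by_contra hr1
    have hr0 : r ≠ 0 := by rintro rfl; omega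
    have hpr : p ≤ r := Nat.minFac_le_of_dvd (by omega) ⟨p * q, by rw [hm, hr]; ring⟩
    have : p ^ 3 ≤ n := by
      rw [hm, hr]
      calc p ^ 3 = p * (p * p) := by ring
        _ ≤ p * (q * r) := by gcongr
    omega
  rw [mul_one] at hr
  have hqp : q < p ^ 2 := by
    rw [hm, hr, pow_three] at hpn
    nlinarith [hp.two_le]
  rcases hpq.eq_or_lt with heq | hlt
  · exact Or.inr (Or.inl ⟨p, hp, by rw [hm, hr, ← heq, sq]⟩)
  · exact Or.inr (Or.inr ⟨p, q, hp, hq, hlt, hqp, by rw [hm, hr]⟩)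

theorem sigma_apply_prime (s : ℕ) {p : ℕ} (hp : p.Prime) : σ s p = 1 + p ^ s := by
  simpa [Finset.sum_range_succ] using sigma_apply_prime_pow (k := s) (i := 1) hp

theorem sigma_three_le_of_lt_pow_three {n : ℕ} (hn : 2 ≤ n)
    (h : ∀ p, p.Prime → p ∣ n → n < p ^ 3) : σ 3 n ≤ n ^ 3 + n ^ 2 := by
  rcases Nat.prime_or_eq_sq_or_eq_mul_of_lt_pow_three hn h with
    hn | ⟨p, hp, rfl⟩ | ⟨p, q, hp, hq, hpq, hqp, rfl⟩
  · rw [sigma_apply_prime 3 hn]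
    nlinarith
  · rw [sigma_apply_prime_pow hp]
    simp only [Finset.sum_range_succ, Finset.sum_range_zero, zero_mul, one_mul, pow_zero]
    have : 1 + p ^ 3 ≤ (p ^ 2) ^ 2 := by nlinarith [hp.two_le]
    rw [show p ^ (2 * 3) = (p ^ 2) ^ 3 by ring]
    omega
  · rw [isMultiplicative_sigma.map_mul_of_coprime ((Nat.coprime_primes hp hq).mpr hpq.ne),
      sigma_apply_prime 3 hp, sigma_apply_prime 3 hq]
    nlinarith [pow_three_add_pow_three_add_one_le hp.two_le hpq hqp]

theorem sigma_eq_pow_add_one_add_sum {n : ℕ} (hn : 2 ≤ n) (s : ℕ) :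
    σ s n = n ^ s + 1 + ∑ d ∈ n.properDivisors.erase 1, d ^ s := by
  rw [sigma_apply, ← Nat.insert_self_properDivisors (by omega),
    Finset.sum_insert Nat.self_notMem_properDivisors,
    ← Finset.add_sum_erase _ _ (Nat.one_mem_properDivisors_iff_one_lt.mpr hn), one_pow,
    add_assoc]

theorem pow_add_one_le_sigma {n : ℕ} (hn : 2 ≤ n) (s : ℕ) : n ^ s + 1 ≤ σ s n := by
  rw [sigma_eq_pow_add_one_add_sum hn]
  exact Nat.le_add_right _ _

theorem sigma_three_mul_add_le {n : ℕ} (hn : 2 ≤ n) (h : σ 3 n ≤ n ^ 3 + n ^ 2) (k : ℕ) :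
    σ (3 * (k + 1)) n + n ^ (2 * k) ≤ n ^ (3 * (k + 1)) + n ^ (2 * (k + 1)) + 1 := by
  rw [sigma_eq_pow_add_one_add_sum hn] at h ⊢
  set S := n.properDivisors.erase 1
  obtain ⟨v, hv⟩ : ∃ v, n ^ 2 = v + 1 := 
    ⟨n ^ 2 - 1, (Nat.sub_add_cancel (Nat.one_le_pow _ _ (by omega))).symm⟩
  have hS : ∑ d ∈ S, d ^ 3 ≤ v := by omega
  have hSk : ∑ d ∈ S, d ^ (3 * (k + 1)) ≤ v ^ (k + 1) :=
    calc ∑ d ∈ S, d ^ (3 * (k + 1)) = ∑ d ∈ S, (d ^ 3) ^ (k + 1) := by simp only [pow_mul]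
      _ ≤ (∑ d ∈ S, d ^ 3) ^ (k + 1) :=
        Finset.sum_pow_le_pow_sum S (fun _ _ ↦ Nat.zero_le _) (Nat.succ_ne_zero k)
      _ ≤ v ^ (k + 1) := Nat.pow_le_pow_left hS _
  have hslack := pow_succ_add_pow_le_add_one_pow_succ (Nat.zero_le v) k
  rw [← hv, ← pow_mul, ← pow_mul] at hslack
  omega

theorem cubic_mul_lt_cubic_mul {n x M A B : ℕ} (hn : 2 ≤ n) (hx : 1 ≤ x)
    (hM : n ^ 3 * x ≤ M)
    (hA : A + x ^ 2 ≤ (n * x) ^ 3 + (n * x) ^ 2 + 1) (hB : M ^ 3 + 1 ≤ B) :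
    (M ^ 3 + M ^ 2 + M + 1) * A < ((n * x) ^ 3 + (n * x) ^ 2 + n * x + 1) * B := by
  have hMN : 4 * (n * x) ≤ M :=
    calc 4 * (n * x) ≤ n ^ 2 * (n * x) := Nat.mul_le_mul_right _ (by nlinarith)
      _ = n ^ 3 * x := by ring
      _ ≤ M := hM
  have hN3 : (n * x) ^ 3 ≤ x ^ 2 * M :=
    calc (n * x) ^ 3 = x ^ 2 * (n ^ 3 * x) := by ring
      _ ≤ x ^ 2 * M := Nat.mul_le_mul_left _ hM
  set N := n * x
  have hN : 1 ≤ N := Nat.one_le_iff_ne_zero.mpr (by positivity)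
  have h1 : M ^ 2 * N ^ 3 ≤ x ^ 2 * M ^ 3 := by nlinarith
  have h2 : 4 * (M ^ 2 * N ^ 2) ≤ M ^ 3 * N :=
    calc 4 * (M ^ 2 * N ^ 2) = (M ^ 2 * N) * (4 * N) := by ring
      _ ≤ (M ^ 2 * N) * M := Nat.mul_le_mul_left _ hMN
      _ = M ^ 3 * N := by ring
  have h3 : 4 * (M * N ^ 3) ≤ M ^ 2 * N ^ 2 :=
    calc 4 * (M * N ^ 3) = (M * N ^ 2) * (4 * N) := by ring
      _ ≤ (M * N ^ 2) * M := Nat.mul_le_mul_left _ hMN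
      _ = M ^ 2 * N ^ 2 := by ring
  have h4 : M ^ 2 ≤ M ^ 2 * N ^ 2 := Nat.le_mul_of_pos_right _ (by positivity)
  have h5 : N ^ 2 + 1 ≤ 2 * N ^ 3 := by nlinarith
  have hA' := Nat.mul_le_mul_left (M ^ 3 + M ^ 2 + M + 1) hA
  have hB' := Nat.mul_le_mul_left (N ^ 3 + N ^ 2 + N + 1) hB
  nlinarith

theorem pow_sum_mul_lt_pow_sum_mul {n k l A B : ℕ} (hn : 2 ≤ n) (hkl : k + 3 ≤ l)
    (hA : A + n ^ (2 * k) ≤ n ^ (3 * (k + 1)) + n ^ (2 * (k + 1)) + 1)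
    (hB : n ^ (3 * l) + 1 ≤ B) :
    (n ^ (3 * l) + n ^ (2 * l) + n ^ l + 1) * A
      < (n ^ (3 * (k + 1)) + n ^ (2 * (k + 1)) + n ^ (k + 1) + 1) * B := by
  have hM : n ^ 3 * n ^ k ≤ n ^ l := by
    rw [← pow_add]; exact Nat.pow_le_pow_right (by omega) (by omega)
  simp only [show n ^ (3 * (k + 1)) = (n * n ^ k) ^ 3 by ring,
    show n ^ (2 * (k + 1)) = (n * n ^ k) ^ 2 by ring, show n ^ (k + 1) = n * n ^ k by ring,
    pow_mul' n 2 k, pow_mul' n 3 l, pow_mul' n 2 l] at hA hB ⊢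
  exact cubic_mul_lt_cubic_mul hn (Nat.one_le_pow _ _ (by omega)) hM hA hB

theorem aFun_neg_general (k l n : ℕ) (hk : Odd k) (hl : Odd l)
    (hkl : k < l) (hn : 2 ≤ n)
    (hp : ∀ p : ℕ, p.Prime → p ∣ n → n < p ^ 3) :
    aFun k l n < 0 := by
  obtain ⟨j, rfl⟩ : ∃ j, k = j + 1 := ⟨k - 1, by have := hk.pos; omega⟩
  have hjl : j + 3 ≤ l := by
    obtain ⟨a, ha⟩ := hk; obtain ⟨b, hb⟩ := hl; omega
  have hA := sigma_three_mul_add_le hn (sigma_three_le_of_lt_pow_three hn hp) j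
  have hB := pow_add_one_le_sigma hn (3 * l)
  have hsigma (s : ℕ) : sigmaZ s n = (σ s n : ℤ) := by simp [sigmaZ, sigma_apply]
  rw [aFun, sub_neg, hsigma, hsigma]
  exact_mod_cast pow_sum_mul_lt_pow_sum_mul hn hjl hA hB

theorem aFun_neg (k l n : ℕ) (hk : Odd k) (hl : Odd l) (hkpos : 0 < k)
    (hkl : k < l) (hn : 2 ≤ n)
    (hp : ∀ p : ℕ, p.Prime → p ∣ n → n < p ^ 3) :
    aFun k l n < 0 :=
  aFun_neg_general k l n hk hl hkl hn hp
end

section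
/- Let k and ℓ be odd positive integers with ℓ > k. For every prime p, one has a_{k,ℓ}(p) < 0. -/
lemma sigmaZ_prime (s p : ℕ) (hp : p.Prime) : sigmaZ s p = 1 + (p : ℤ) ^ s := by
  rw [sigmaZ, hp.divisors, Finset.sum_pair hp.one_lt.ne]
  push_cast
  ring

theorem aFun_prime_neg (k l : ℕ) (hk : Odd k) (hl : Odd l) (hkpos : 0 < k)
    (hkl : k < l) (p : ℕ) (hp : p.Prime) :
    aFun k l p < 0 := by
  have hx : (2 : ℤ) ≤ (p : ℤ) := by exact_mod_cast hp.two_le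
  set x : ℤ := (p : ℤ) with hxdef
  have ha : (2 : ℤ) ≤ x ^ k := le_trans hx (le_self_pow₀ (by linarith) hkpos.ne')
  have hab : x ^ k < x ^ l := pow_lt_pow_right₀ (by linarith) hkl
  rw [aFun, sigmaZ_prime _ _ hp, sigmaZ_prime _ _ hp]
  have h3k : x ^ (3 * k) = (x ^ k) ^ 3 := by rw [mul_comm, pow_mul]
  have h2k : x ^ (2 * k) = (x ^ k) ^ 2 := by rw [mul_comm, pow_mul]
  have h3l : x ^ (3 * l) = (x ^ l) ^ 3 := by rw [mul_comm, pow_mul]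
  have h2l : x ^ (2 * l) = (x ^ l) ^ 2 := by rw [mul_comm, pow_mul]
  rw [h3k, h2k, h3l, h2l]
  set a := x ^ k
  set b := x ^ l
  nlinarith [mul_pos (sub_pos.2 hab) (by nlinarith : (0:ℤ) < a * b - 1),
    mul_pos (by linarith : (0:ℤ) < a + 1) (by linarith : (0:ℤ) < b + 1),
    sq_nonneg (a*b), sq_nonneg (a - b), sq_nonneg (a + b)]
end

section
/- Let t ≥ 2 and 0 < r < t be integers with gcd(r, t) = 1, and let k and ℓ be odd positive integers with ℓ > k. Then for every positive integer n, b_{k,ℓ}^{r,t}(n) ≥ 0; moreover, for every integer n ≥ 2, b_{k,ℓ}^{r,t}(n) = 0 if and only if n is prime and n ≡ r (mod t). -/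
/-- The coefficient `b_{k,ℓ}^{r,t}(n)`. -/
def bFun (k l r t n : ℕ) : ℤ :=
  if n % t = r % t then
    ∑ d ∈ n.divisors, (((n : ℤ) ^ l + 1) * (d : ℤ) ^ k - ((n : ℤ) ^ k + 1) * (d : ℤ) ^ l)
  else
    ∑ d ∈ n.divisors, ((n : ℤ) ^ l + 1) * (d : ℤ) ^ k

lemma bFun_sum_rewrite (k l n : ℕ) :
    ∑ d ∈ n.divisors, (((n : ℤ) ^ l + 1) * (d : ℤ) ^ k - ((n : ℤ) ^ k + 1) * (d : ℤ) ^ l)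
    = ∑ d ∈ n.divisors,
        (((d : ℤ) ^ (k + l) - 1) * (((n / d : ℕ) : ℤ) ^ l - ((n / d : ℕ) : ℤ) ^ k)) := by
  have h1 : ∑ d ∈ n.divisors, ((d : ℤ) ^ k - (d : ℤ) ^ l)
      = ∑ d ∈ n.divisors, (((n / d : ℕ) : ℤ) ^ k - ((n / d : ℕ) : ℤ) ^ l) :=
    (Nat.sum_div_divisors n (fun d => ((d : ℤ) ^ k - (d : ℤ) ^ l))).symm
  have key : ∑ d ∈ n.divisors, (((n : ℤ) ^ l + 1) * (d : ℤ) ^ k - ((n : ℤ) ^ k + 1) * (d : ℤ) ^ l)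
      = (∑ d ∈ n.divisors, ((n : ℤ) ^ l * (d : ℤ) ^ k - (n : ℤ) ^ k * (d : ℤ) ^ l))
        + ∑ d ∈ n.divisors, ((d : ℤ) ^ k - (d : ℤ) ^ l) := by
    rw [← Finset.sum_add_distrib]
    exact Finset.sum_congr rfl fun d _ => by ring
  rw [key, h1, ← Finset.sum_add_distrib]
  refine Finset.sum_congr rfl fun d hd => ?_
  obtain ⟨hdvd, hn0⟩ := Nat.mem_divisors.mp hd
  have hmul : (d : ℤ) * ((n / d : ℕ) : ℤ) = (n : ℤ) := by
    exact_mod_cast congrArg (Nat.cast : ℕ → ℤ) (Nat.mul_div_cancel' hdvd)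
  rw [← hmul]
  ring

theorem bFun_nonneg_and_detects (t r k l : ℕ) (ht : 2 ≤ t) (hr : 0 < r) (hrt : r < t)
    (hgcd : Nat.gcd r t = 1) (hk : Odd k) (hl : Odd l) (hkpos : 0 < k) (hkl : k < l) :
    (∀ n : ℕ, 0 < n → 0 ≤ bFun k l r t n) ∧
    (∀ n : ℕ, 2 ≤ n → (bFun k l r t n = 0 ↔ n.Prime ∧ n % t = r % t)) := by
  -- pointwise nonnegativity of the rewritten summand
  have hterm_nonneg : ∀ n : ℕ, 0 < n → ∀ d ∈ n.divisors,
      (0 : ℤ) ≤ ((d : ℤ) ^ (k + l) - 1) * (((n / d : ℕ) : ℤ) ^ l - ((n / d : ℕ) : ℤ) ^ k) := by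
    intro n hn d hd
    obtain ⟨hdvd, hn0⟩ := Nat.mem_divisors.mp hd
    have hd1 : 1 ≤ (d : ℤ) := by
      exact_mod_cast Nat.one_le_iff_ne_zero.mpr (fun h => by simp [h] at hdvd; omega)
    have hdpos : 0 < d := Nat.pos_of_mem_divisors hd
    have he1 : 1 ≤ ((n / d : ℕ) : ℤ) := by
      have : 1 ≤ n / d := (Nat.one_le_div_iff hdpos).mpr (Nat.le_of_dvd hn hdvd)
      exact_mod_cast this
    have h1 : (0 : ℤ) ≤ (d : ℤ) ^ (k + l) - 1 := by
      have := one_le_pow₀ hd1 (n := k + l)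
      linarith
    have h2 : (0 : ℤ) ≤ ((n / d : ℕ) : ℤ) ^ l - ((n / d : ℕ) : ℤ) ^ k :=
      sub_nonneg.mpr (pow_le_pow_right₀ he1 hkl.le)
    exact mul_nonneg h1 h2
  have hpos_off : ∀ n : ℕ, 0 < n →
      0 < ∑ d ∈ n.divisors, ((n : ℤ) ^ l + 1) * (d : ℤ) ^ k := by
    intro n hn
    apply Finset.sum_pos
    · intro d hd
      obtain ⟨hdvd, hn0⟩ := Nat.mem_divisors.mp hd
      have hdpos : 0 < d := Nat.pos_of_mem_divisors hd
      have : (0 : ℤ) < (d : ℤ) := by exact_mod_cast hdpos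
      have hnl : (0 : ℤ) < (n : ℤ) ^ l + 1 := by positivity
      positivity
    · exact ⟨1, Nat.one_mem_divisors.mpr hn.ne'⟩
  constructor
  · intro n hn
    unfold bFun
    split_ifs with h
    · rw [bFun_sum_rewrite]
      exact Finset.sum_nonneg (hterm_nonneg n hn)
    · exact (hpos_off n hn).le
  · intro n hn2
    have hn : 0 < n := by omega
    unfold bFun
    split_ifs with h
    · rw [bFun_sum_rewrite]
      constructor
      · intro hzero
        refine ⟨?_, h⟩
        by_contra hnp
        obtain ⟨m, hmdvd, hm2, hmlt⟩ := Nat.exists_dvd_of_not_prime2 hn2 hnp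
        have hmem : m ∈ n.divisors := Nat.mem_divisors.mpr ⟨hmdvd, hn.ne'⟩
        have hall := (Finset.sum_eq_zero_iff_of_nonneg (hterm_nonneg n hn)).mp hzero m hmem
        have hmz : 0 < m := by omega
        have he2 : 2 ≤ n / m := by
          have h1 : 1 ≤ n / m := (Nat.one_le_div_iff hmz).mpr (Nat.le_of_dvd hn hmdvd)
          have hnm : n / m * m = n := Nat.div_mul_cancel hmdvd
          rcases Nat.lt_or_ge (n / m) 2 with hlt | hge
          · have h1' : n / m = 1 := by omega
            rw [h1', one_mul] at hnm
            omega
          · exact hge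
        have hd2 : (2 : ℤ) ≤ (m : ℤ) := by exact_mod_cast hm2
        have hpos1 : (0 : ℤ) < (m : ℤ) ^ (k + l) - 1 := by
          have : (1 : ℤ) < (m : ℤ) ^ (k + l) := by
            calc (1 : ℤ) < 2 := one_lt_two
            _ ≤ (m : ℤ) := hd2
            _ ≤ (m : ℤ) ^ (k + l) := le_self_pow₀ (by linarith) (by omega)
          linarith
        have hpos2 : (0 : ℤ) < ((n / m : ℕ) : ℤ) ^ l - ((n / m : ℕ) : ℤ) ^ k := by
          have he2' : (1 : ℤ) < ((n / m : ℕ) : ℤ) := by exact_mod_cast he2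
          exact sub_pos.mpr (pow_lt_pow_right₀ he2' hkl)
        have hposm := mul_pos hpos1 hpos2
        exact absurd hall hposm.ne'
      · rintro ⟨hp, -⟩
        apply Finset.sum_eq_zero
        intro d hd
        obtain ⟨hdvd, -⟩ := Nat.mem_divisors.mp hd
        rcases (Nat.Prime.eq_one_or_self_of_dvd hp d hdvd) with h1 | h1
        · subst h1; simp
        · rw [h1, Nat.div_self hn]
          simp
    · constructor
      · intro hzero
        exact absurd hzero (hpos_off n hn).ne'
      · rintro ⟨-, hc⟩
        exact absurd hc h
end

section
/- Fix integers t ≥ 2 and 0 < r < t with gcd(r, t) = 1, and fix an odd positive integer k. The family of functions n ↦ b_{k,ℓ}^{r,t}(n), indexed by odd integers ℓ > k and regarded as elements of the ℂ-vector space of functions from the positive integers to ℂ, is linearly independent over ℂ: every finite nontrivial ℂ-linear combination of distinct members of the family is a nonzero function. -/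
/-! On the residue class `n ≡ 0 (mod t)`, which differs from the class of `r`, we have
`b_{k,ℓ}^{r,t}(n) = (n^ℓ + 1) σ_k(n)`. Dividing by `σ_k(n) ≠ 0`, a linear relation among the
`b_{k,ℓ}^{r,t}` gives one among the polynomials `X^ℓ + 1` evaluated at the infinitely many points
`n = t, 2t, 3t, …`, hence among the polynomials themselves; but these have pairwise distinct
degrees. -/

open Polynomial

theorem LinearIndependent.of_mul_comp {R α β ι : Type*} [CommSemiring R] {v : ι → α → R}
    (e : β → α) (w : β → R) (h : LinearIndependent R fun i b => v i (e b) * w b) :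
    LinearIndependent R v :=
  h.of_comp (LinearMap.mulRight R w ∘ₗ LinearMap.funLeft R R e)

theorem LinearIndependent.eval_of_infinite_range {R ι β : Type*} [CommRing R] [IsDomain R]
    {p : ι → R[X]} (hp : LinearIndependent R p) {x : β → R} (hx : (Set.range x).Infinite) :
    LinearIndependent R fun i b => (p i).eval (x b) := by
  refine hp.map' (LinearMap.pi fun b => leval (x b)) (LinearMap.ker_eq_bot'.mpr fun q hq => ?_)
  refine q.eq_zero_of_infinite_isRoot (hx.mono ?_)
  rintro _ ⟨b, rfl⟩
  exact congrFun hq b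

namespace Polynomial

noncomputable def xPowAddOne (R : Type*) [Semiring R] [CharZero R] : Sequence R where
  elems' i := X ^ i + 1
  degree_eq' i := by
    rcases i.eq_zero_or_pos with rfl | hi
    · rw [Nat.cast_zero, pow_zero, ← C_1, ← C_add, one_add_one_eq_two]
      exact degree_C two_ne_zero
    · simpa using degree_X_pow_add_C hi (1 : R)

end Polynomial

open ArithmeticFunction

theorem bFun_of_mod_ne {k l r t n : ℕ} (h : n % t ≠ r % t) :
    bFun k l r t n = ((n : ℤ) ^ l + 1) * (sigma k n : ℕ) := by
  simp [bFun, h, sigma_apply, Finset.mul_sum]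

theorem bFun_linearIndependent_general (t r k : ℕ) (hr : 0 < r) (hrt : r < t) :
    LinearIndependent ℂ
      (fun l : {l : ℕ // Odd l ∧ k < l} => fun n : ℕ+ => (bFun k (l : ℕ) r t (n : ℕ) : ℂ)) := by
  let N (m : ℕ) : ℕ+ := ⟨(m + 1) * t, Nat.mul_pos m.succ_pos (hr.trans hrt)⟩
  have hN_mod (m : ℕ) : (N m : ℕ) % t ≠ r % t := by
    simp [N, Nat.mod_eq_of_lt hrt, hr.ne]
  have hN_inj : Function.Injective fun m => ((N m : ℕ) : ℂ) :=
    Nat.cast_injective.comp fun a b h => by simpa [N, (hr.trans hrt).ne'] using h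
  have hterm (l m : ℕ) :
      (bFun k l r t (N m) : ℂ) * (sigma k (N m) : ℂ)⁻¹ = (xPowAddOne ℂ l).eval ((N m : ℕ) : ℂ) := by
    simp [xPowAddOne, bFun_of_mod_ne (hN_mod m)]
  refine .of_mul_comp N (fun m => (sigma k (N m) : ℂ)⁻¹) ?_
  simp only [hterm]
  exact ((xPowAddOne ℂ).linearIndependent.comp _ Subtype.val_injective).eval_of_infinite_range
    (Set.infinite_range_of_injective hN_inj)

/-- For fixed `t, r` and fixed odd `k ≥ 1`, the coefficient functions
`n ↦ b_{k,ℓ}^{r,t}(n)`, indexed by odd `ℓ > k`, are linearly independent over `ℂ`. -/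
theorem bFun_linearIndependent (t r k : ℕ) (ht : 2 ≤ t) (hr : 0 < r) (hrt : r < t)
    (hgcd : Nat.gcd r t = 1) (hk : Odd k) (hkpos : 0 < k) :
    LinearIndependent ℂ
      (fun l : {l : ℕ // Odd l ∧ k < l} => fun n : ℕ+ => (bFun k (l : ℕ) r t (n : ℕ) : ℂ)) :=
  bFun_linearIndependent_general t r k hr hrt
end
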